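/- arXiv:math/9907026 — 3 statements merged into one kernel-verified Lean document; each statement's English description precedes it below -/
import Mathlib

section
/- Let Γ be a graph with vertex set Λ, and suppose {V_s : s ∈ Λ} is a collection of isometries on a Hilbert space H such that for every pair of distinct vertices s and t: V_s V_t = V_t V_s and V_s* V_t = V_t V_s* if s and t are adjacent in Γ, and V_s* V_t = 0 if s and t are not adjacent in Γ. Let A_M = Γ_{s∈Λ} ℤ⟨s⟩ be the right-angled Artin group associated to Γ, with positive cone the right-angled Artin monoid A_M^+. Then the maps s ↦ V_s extend to a covariant isometric representation V of A_M^+ on H. -/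
set_option linter.unusedSectionVars false
set_option linter.unusedVariables false
set_option maxHeartbeats 1000000


universe u v

/-- A syllable: a vertex `I` of the graph together with a nontrivial element of `G I`. -/
def Syllable {Λ : Type u} (G : Λ → Type v) [∀ I, Group (G I)] : Type (max u v) :=
  Σ I : Λ, {g : G I // g ≠ 1}

section Words

variable {Λ : Type u} {G : Λ → Type v} [∀ I, Group (G I)]

/-- A single shuffle: swap two consecutive syllables with adjacent vertices. -/
def ShuffleStep (adj : Λ → Λ → Prop) (L L' : List (Syllable G)) : Prop :=
  ∃ (A B : List (Syllable G)) (s t : Syllable G),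
    adj s.1 t.1 ∧ L = A ++ s :: t :: B ∧ L' = A ++ t :: s :: B

/-- Shuffle equivalence: finitely many shuffles. -/
def ShuffleEquiv (adj : Λ → Λ → Prop) : List (Syllable G) → List (Syllable G) → Prop :=
  Relation.ReflTransGen (ShuffleStep adj)

/-- An expression admits an amalgamation iff it has two consecutive syllables at the
same vertex. -/
def Amalgamable (L : List (Syllable G)) : Prop :=
  ∃ (A B : List (Syllable G)) (s t : Syllable G), s.1 = t.1 ∧ L = A ++ s :: t :: B

/-- An expression is reduced iff it is not shuffle equivalent to an expression
admitting an amalgamation. -/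
def Reduced (adj : Λ → Λ → Prop) (L : List (Syllable G)) : Prop :=
  ¬ ∃ L', ShuffleEquiv adj L L' ∧ Amalgamable L'

/-- The syllable at position `i` is an initial syllable of the expression `L`:
its vertex is adjacent to the vertices of all earlier syllables. -/
def InitialAt (adj : Λ → Λ → Prop) (L : List (Syllable G)) (i : Fin L.length) : Prop :=
  ∀ j : Fin L.length, j < i → adj (L.get j).1 (L.get i).1

end Words

section GroupPart

variable {Λ : Type u} (adj : Λ → Λ → Prop) (G : Λ → Type v) [∀ I, Group (G I)]

/-- The graph product of the family of groups `G` over the graph `adj`: the quotient of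
the free product by the normal closure of the commutators coming from adjacent vertices. -/
def GraphProduct : Type (max u v) :=
  Monoid.CoprodI G ⧸ Subgroup.normalClosure
    {g : Monoid.CoprodI G | ∃ (I J : Λ) (x : G I) (y : G J), adj I J ∧
      g = Monoid.CoprodI.of x * Monoid.CoprodI.of y *
          (Monoid.CoprodI.of x)⁻¹ * (Monoid.CoprodI.of y)⁻¹}

instance : Group (GraphProduct adj G) :=
  inferInstanceAs (Group (_ ⧸ _))

/-- The canonical image in the graph product of an element of one of the groups. -/
def mkOf {I : Λ} (g : G I) : GraphProduct adj G :=
  QuotientGroup.mk (Monoid.CoprodI.of g)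

/-- Evaluation of an expression (a word in the syllables) in the graph product. -/
def evalWord (L : List (Syllable G)) : GraphProduct adj G :=
  (L.map fun s => mkOf adj G (s.2.1 : G s.1)).prod

/-- `L` is an expression for the group element `x`. -/
def ExprFor (L : List (Syllable G)) (x : GraphProduct adj G) : Prop :=
  evalWord adj G L = x

/-- `s` is an initial syllable of the group element `x`: some reduced expression for `x`
has `s` as an initial syllable. -/
def IsInitialSyllable (x : GraphProduct adj G) (s : Syllable G) : Prop :=
  ∃ L, Reduced adj L ∧ ExprFor adj G L x ∧ ∃ i : Fin L.length, InitialAt adj L i ∧ L.get i = s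

/-- `s` is a final syllable of the group element `x`: it is an initial syllable of the
reverse of some reduced expression for `x`. -/
def IsFinalSyllable (x : GraphProduct adj G) (s : Syllable G) : Prop :=
  ∃ L, Reduced adj L ∧ ExprFor adj G L x ∧
    ∃ i : Fin L.reverse.length, InitialAt adj L.reverse i ∧ L.reverse.get i = s

/-- `I` is an initial vertex of the group element `x`, i.e. `I ∈ Δ(x)`. -/
def InitialVertexOf (x : GraphProduct adj G) (I : Λ) : Prop :=
  ∃ s : Syllable G, IsInitialSyllable adj G x s ∧ s.1 = I

/-- `I` is a final vertex of the group element `x`, i.e. `I ∈ Δʳ(x)`. -/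
def FinalVertexOf (x : GraphProduct adj G) (I : Λ) : Prop :=
  ∃ s : Syllable G, IsFinalSyllable adj G x s ∧ s.1 = I

/-- `I` is a vertex of the group element `x`: some (hence any) reduced expression
for `x` has a syllable at the vertex `I`. -/
def VertexOf (x : GraphProduct adj G) (I : Λ) : Prop :=
  ∃ L, Reduced adj L ∧ ExprFor adj G L x ∧ ∃ s ∈ L, Sigma.fst s = I

/-- `c` is the element `x_I ∈ G_I`: either `c` is nontrivial and the initial syllable of
`x` at the vertex `I`, or `c = 1` and `I` is not an initial vertex of `x`. -/
def InitialPart (x : GraphProduct adj G) (I : Λ) (c : G I) : Prop :=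
  (∃ h : c ≠ 1, IsInitialSyllable adj G x ⟨I, ⟨c, h⟩⟩) ∨ (c = 1 ∧ ¬ InitialVertexOf adj G x I)

/-- The positive cone of the graph product of partially ordered groups: the submonoid
generated by the union of the positive cones of the factors. -/
def posCone (Pc : ∀ I, Submonoid (G I)) : Submonoid (GraphProduct adj G) :=
  Submonoid.closure {g | ∃ (I : Λ) (p : G I), p ∈ Pc I ∧ g = mkOf adj G p}

end GroupPart

section Order

variable {H : Type*} [Group H]

/-- `x ≤ y` in the left-invariant partial order determined by the cone `P`. -/
def lle (P : Submonoid H) (x y : H) : Prop := x⁻¹ * y ∈ P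

/-- `x ≤ᵣ y` in the right-invariant partial order determined by the cone `P`. -/
def rle (P : Submonoid H) (x y : H) : Prop := y * x⁻¹ ∈ P

/-- `x` and `y` have a common upper bound for the left-invariant order. -/
def HasUB (P : Submonoid H) (x y : H) : Prop := ∃ z, lle P x z ∧ lle P y z

/-- `m` is a least upper bound of `x` and `y` for the left-invariant order. -/
def IsLub' (P : Submonoid H) (x y m : H) : Prop :=
  lle P x m ∧ lle P y m ∧ ∀ w, lle P x w → lle P y w → lle P m w

/-- `w` is a greatest lower bound of `u` and `v` for the right-invariant order. -/
def IsRGlb (P : Submonoid H) (u v w : H) : Prop :=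
  rle P w u ∧ rle P w v ∧ ∀ z, rle P z u → rle P z v → rle P z w

/-- `(H,P)` is a partially ordered group: `P ∩ P⁻¹ = {1}`. -/
def IsPoGroup (P : Submonoid H) : Prop := ∀ x : H, x ∈ P → x⁻¹ ∈ P → x = 1

/-- `(H,P)` is a quasi-lattice ordered group: it is a partially ordered group in which
every pair of elements with a common upper bound has a least upper bound. -/
def IsQLO (P : Submonoid H) : Prop :=
  IsPoGroup P ∧ ∀ x y : H, HasUB P x y → ∃ m, IsLub' P x y m

end Order

section Rep

variable {E : Type*} [NormedAddCommGroup E] [InnerProductSpace ℂ E] [CompleteSpace E]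
variable {H : Type*} [Group H]

/-- `V` is an isometric representation of the submonoid `P` on the Hilbert space `E`:
a unital multiplicative map whose values are isometries. -/
def IsIsomRep (P : Submonoid H) (V : ↥P → (E →L[ℂ] E)) : Prop :=
  V 1 = 1 ∧ (∀ x y : ↥P, V (x * y) = V x * V y) ∧
    ∀ x : ↥P, ContinuousLinearMap.adjoint (V x) * V x = 1

/-- `V` is covariant (in Nica's sense) for the quasi-lattice order with cone `P`:
`V_x V_x^* V_y V_y^* = V_{x ∨ y} V_{x ∨ y}^*`, with the convention `V_∞ = 0`. -/
def IsCovariantRep (P : Submonoid H) (V : ↥P → (E →L[ℂ] E)) : Prop :=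
  ∀ x y : ↥P,
    (¬ HasUB P (x : H) (y : H) →
      V x * ContinuousLinearMap.adjoint (V x) *
        (V y * ContinuousLinearMap.adjoint (V y)) = 0) ∧
    ∀ m : ↥P, IsLub' P (x : H) (y : H) (m : H) →
      V x * ContinuousLinearMap.adjoint (V x) *
        (V y * ContinuousLinearMap.adjoint (V y)) =
        V m * ContinuousLinearMap.adjoint (V m)

end Rep

/-- The positive cone `ℕ ⊆ ℤ` of the infinite cyclic group, written multiplicatively. -/
def natCone : Submonoid (Multiplicative ℤ) where
  carrier := {g | 0 ≤ Multiplicative.toAdd g}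
  one_mem' := by
    simp only [Set.mem_setOf_eq, toAdd_one, le_refl]
  mul_mem' := by
    intro a b ha hb
    simp only [Set.mem_setOf_eq, toAdd_mul] at *
    exact add_nonneg ha hb

lemma ofAdd_one_mem_natCone : Multiplicative.ofAdd (1 : ℤ) ∈ natCone := by
  show (0:ℤ) ≤ Multiplicative.toAdd (Multiplicative.ofAdd (1:ℤ))
  simp

/-- The right-angled Artin group associated to the graph `adj` on the vertex set `Λ`:
the graph product of copies of `ℤ`. -/
def Raag {Λ : Type u} (adj : Λ → Λ → Prop) : Type u :=
  GraphProduct adj (fun _ : Λ => Multiplicative ℤ)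

instance {Λ : Type u} (adj : Λ → Λ → Prop) : Group (Raag adj) :=
  inferInstanceAs (Group (GraphProduct adj (fun _ : Λ => Multiplicative ℤ)))

/-- The right-angled Artin monoid: the positive cone of the right-angled Artin group,
i.e. the submonoid generated by the canonical generators. -/
def RaagCone {Λ : Type u} (adj : Λ → Λ → Prop) : Submonoid (Raag adj) :=
  posCone adj (fun _ : Λ => Multiplicative ℤ) (fun _ => natCone)

/-- The canonical generator of the right-angled Artin monoid at the vertex `s`. -/
def raagGen {Λ : Type u} (adj : Λ → Λ → Prop) (s : Λ) : ↥(RaagCone adj) :=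
  ⟨mkOf adj (fun _ : Λ => Multiplicative ℤ) (I := s) (Multiplicative.ofAdd 1),
    Submonoid.subset_closure ⟨s, Multiplicative.ofAdd 1, ofAdd_one_mem_natCone, rfl⟩⟩

set_option linter.unusedSectionVars false
set_option linter.unusedVariables false
namespace CL
variable {Λ : Type u} [DecidableEq Λ] (adj : Λ → Λ → Prop)
def Stp (l l' : List Λ) : Prop :=
  ∃ (A B : List Λ) (s t : Λ), adj s t ∧ l = A ++ s :: t :: B ∧ l' = A ++ t :: s :: B
def WEq : List Λ → List Λ → Prop := Relation.ReflTransGen (Stp adj)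
def FP (p q : Λ) (l : List Λ) : List Λ := l.filter (fun x => x = p ∨ x = q)
def SameInv (u v : List Λ) : Prop :=
  (∀ r, u.count r = v.count r) ∧
  ∀ p q : Λ, p ≠ q → ¬ adj p q → FP p q u = FP p q v
variable {adj}
theorem WEq.refl (l : List Λ) : WEq adj l l := Relation.ReflTransGen.refl
theorem WEq.trans {a b c : List Λ} (h : WEq adj a b) (h' : WEq adj b c) : WEq adj a c :=
  Relation.ReflTransGen.trans h h'
theorem Stp.symm (hsymm : Symmetric adj) {a b : List Λ} (h : Stp adj a b) : Stp adj b a := by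
  obtain ⟨A, B, s, t, hst, rfl, rfl⟩ := h
  exact ⟨A, B, t, s, hsymm hst, rfl, rfl⟩
theorem WEq.symm (hsymm : Symmetric adj) {a b : List Λ} (h : WEq adj a b) : WEq adj b a := by
  induction h with
  | refl => exact WEq.refl _
  | tail _ h ih => exact WEq.trans (Relation.ReflTransGen.single (h.symm hsymm)) ih
theorem Stp.cons {a b : List Λ} (x : Λ) (h : Stp adj a b) : Stp adj (x :: a) (x :: b) := by
  obtain ⟨A, B, s, t, hst, rfl, rfl⟩ := h
  exact ⟨x :: A, B, s, t, hst, rfl, rfl⟩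
theorem WEq.cons {a b : List Λ} (x : Λ) (h : WEq adj a b) : WEq adj (x :: a) (x :: b) := by
  induction h with
  | refl => exact WEq.refl _
  | tail _ h ih => exact ih.trans (Relation.ReflTransGen.single (h.cons x))
theorem WEq.append_left {a b : List Λ} (c : List Λ) (h : WEq adj a b) :
    WEq adj (c ++ a) (c ++ b) := by
  induction c with
  | nil => exact h
  | cons x c ih => exact ih.cons x
theorem Stp.append_right {a b : List Λ} (c : List Λ) (h : Stp adj a b) :
    Stp adj (a ++ c) (b ++ c) := by
  obtain ⟨A, B, s, t, hst, rfl, rfl⟩ := h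
  exact ⟨A, B ++ c, s, t, hst, by simp, by simp⟩
theorem WEq.append_right {a b : List Λ} (c : List Λ) (h : WEq adj a b) :
    WEq adj (a ++ c) (b ++ c) := by
  induction h with
  | refl => exact WEq.refl _
  | tail _ h ih => exact ih.trans (Relation.ReflTransGen.single (h.append_right c))
theorem WEq.append {a b c d : List Λ} (h : WEq adj a b) (h' : WEq adj c d) :
    WEq adj (a ++ c) (b ++ d) :=
  (h.append_right c).trans (WEq.append_left b h')
theorem WEq.length {a b : List Λ} (h : WEq adj a b) : a.length = b.length := by
  induction h with
  | refl => rfl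
  | tail _ h ih => obtain ⟨A, B, s, t, _, rfl, rfl⟩ := h; simpa using ih
theorem WEq.count {a b : List Λ} (h : WEq adj a b) (r : Λ) : a.count r = b.count r := by
  induction h with
  | refl => rfl
  | tail _ h ih =>
    obtain ⟨A, B, s, t, _, rfl, rfl⟩ := h
    simp only [List.count_append, List.count_cons] at *
    omega

-- FP helpers
theorem FP_append {p q : Λ} (a b : List Λ) : FP p q (a ++ b) = FP p q a ++ FP p q b :=
  List.filter_append _ _
theorem FP_cons_pos {p q x : Λ} (l : List Λ) (h : x = p ∨ x = q) :
    FP p q (x :: l) = x :: FP p q l := by simp [FP, List.filter_cons, h]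
theorem FP_cons_neg {p q x : Λ} (l : List Λ) (h : ¬(x = p ∨ x = q)) :
    FP p q (x :: l) = FP p q l := by simp [FP, List.filter_cons, h]
theorem mem_FP {p q x : Λ} {l : List Λ} : x ∈ FP p q l ↔ x ∈ l ∧ (x = p ∨ x = q) := by
  simp [FP, List.mem_filter]
theorem FP_eq_nil {p q : Λ} {l : List Λ} (h : ∀ x ∈ l, ¬(x = p ∨ x = q)) :
    FP p q l = [] := by
  rw [FP, List.filter_eq_nil_iff]; intro x hx; simpa using h x hx

theorem WEq.fp (hsymm : Symmetric adj) (hirr : ∀ s, ¬ adj s s) {a b : List Λ}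
    (h : WEq adj a b) (p q : Λ) (hpq : p ≠ q) (hnadj : ¬ adj p q) :
    FP p q a = FP p q b := by
  induction h with
  | refl => rfl
  | tail _ h ih =>
    obtain ⟨A, B, s, t, hst, rfl, rfl⟩ := h
    refine ih.trans ?_
    have hstne : s ≠ t := fun h => hirr s (h ▸ hst)
    have hh : ¬ ((s = p ∨ s = q) ∧ (t = p ∨ t = q)) := by
      rintro ⟨hs | hs, ht | ht⟩
      · exact hstne (hs.trans ht.symm)
      · exact hnadj (hs ▸ ht ▸ hst)
      · exact hnadj (hsymm (hs ▸ ht ▸ hst))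
      · exact hstne (hs.trans ht.symm)
    rw [FP_append, FP_append]
    rcases Decidable.em (s = p ∨ s = q) with hs | hs <;>
      rcases Decidable.em (t = p ∨ t = q) with ht | ht
    · exact absurd ⟨hs, ht⟩ hh
    · rw [FP_cons_pos _ hs, FP_cons_neg _ ht, FP_cons_neg _ ht, FP_cons_pos _ hs]
    · rw [FP_cons_neg _ hs, FP_cons_pos _ ht, FP_cons_pos _ ht, FP_cons_neg _ hs]
    · rw [FP_cons_neg _ hs, FP_cons_neg _ ht, FP_cons_neg _ ht, FP_cons_neg _ hs]

theorem sameInv_of_weq (hsymm : Symmetric adj) (hirr : ∀ s, ¬ adj s s) {a b : List Λ}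
    (h : WEq adj a b) : SameInv adj a b :=
  ⟨h.count, fun p q hpq hn => h.fp hsymm hirr p q hpq hn⟩

theorem filter_erase (p : Λ → Bool) (a : Λ) (hpa : p a = true) :
    ∀ l : List Λ, (l.erase a).filter p = (l.filter p).erase a := by
  intro l
  induction l with
  | nil => simp
  | cons b l ih =>
    rcases Decidable.em (b = a) with rfl | hba
    · simp [List.erase_cons_head, List.filter_cons, hpa]
    · rw [List.erase_cons_tail (by simpa using hba), List.filter_cons, List.filter_cons]
      rcases Decidable.em (p b = true) with hb | hb
      · simp only [hb, if_true]
        rw [List.erase_cons_tail (by simpa using hba), ih]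
      · simp only [eq_false_of_ne_true hb, if_false, ih]
        simp

theorem first_split {a : Λ} {l : List Λ} (h : a ∈ l) :
    ∃ s t : List Λ, l = s ++ a :: t ∧ a ∉ s := by
  induction l with
  | nil => simp at h
  | cons b l ih =>
    rcases Decidable.em (b = a) with rfl | hba
    · exact ⟨[], l, rfl, by simp⟩
    · have h' : a ∈ l := by
        rcases List.mem_cons.mp h with h1 | h1
        · exact absurd h1.symm hba
        · exact h1
      rcases ih h' with ⟨s, t, rfl, hns⟩
      refine ⟨b :: s, t, rfl, ?_⟩
      intro hmem
      rcases List.mem_cons.mp hmem with h1 | h1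
      · exact hba h1.symm
      · exact hns h1

theorem bubble {s : Λ} {v₀ v₁ : List Λ} (h : ∀ x ∈ v₀, adj x s) :
    WEq adj (v₀ ++ s :: v₁) (s :: (v₀ ++ v₁)) := by
  induction v₀ with
  | nil => exact WEq.refl _
  | cons a v₀ ih =>
    have h1 : WEq adj (a :: (v₀ ++ s :: v₁)) (a :: s :: (v₀ ++ v₁)) :=
      (ih (fun x hx => h x (List.mem_cons_of_mem a hx))).cons a
    refine h1.trans (Relation.ReflTransGen.single ?_)
    exact ⟨[], v₀ ++ v₁, a, s, h a (List.mem_cons_self (a := a) (l := v₀)), rfl, rfl⟩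

theorem sameInv_weq (hsymm : Symmetric adj) (hirr : ∀ s, ¬ adj s s) :
    ∀ u v : List Λ, SameInv adj u v → WEq adj u v := by
  intro u
  induction u with
  | nil =>
    rintro (_ | ⟨t, v⟩) ⟨hc, hf⟩
    · exact WEq.refl _
    · have := hc t; simp [List.count_cons] at this
  | cons s u' ih =>
    rintro v ⟨hc, hf⟩
    have hsv : s ∈ v := by
      have := hc s; simp only [List.count_cons_self] at this
      exact List.count_pos_iff.mp (by omega)
    obtain ⟨v₀, v₁, rfl, hns⟩ := first_split hsv
    have hadj : ∀ x ∈ v₀, adj x s := by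
      intro x hx
      by_contra hnadj
      have hxs : x ≠ s := fun h => hns (h ▸ hx)
      have hfv := hf x s hxs hnadj
      rw [FP_cons_pos _ (Or.inr rfl), FP_append, FP_cons_pos _ (Or.inr rfl)] at hfv
      have hxmem : x ∈ FP x s v₀ := mem_FP.mpr ⟨hx, Or.inl rfl⟩
      rcases hFP : FP x s v₀ with _ | ⟨y, ys⟩
      · rw [hFP] at hxmem; simp at hxmem
      · rw [hFP] at hfv
        have hy : s = y := by simpa using congrArg List.head? hfv
        have hymem : y ∈ v₀ := (mem_FP.mp (hFP ▸ List.mem_cons_self (a := y) (l := ys))).1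
        exact hns (hy ▸ hymem)
    have hb : WEq adj (v₀ ++ s :: v₁) (s :: (v₀ ++ v₁)) := bubble hadj
    have hinv : SameInv adj u' (v₀ ++ v₁) := by
      constructor
      · intro r
        have := hc r
        simp only [List.count_cons, List.count_append] at *
        omega
      · intro p q hpq hnadj
        have hfv := hf p q hpq hnadj
        rcases Decidable.em (s = p ∨ s = q) with hs | hs
        · have hv₀ : FP p q v₀ = [] := by
            refine FP_eq_nil ?_
            intro x hx
            rintro (rfl | rfl)
            · rcases hs with rfl | rfl
              · exact hns hx
              · exact hnadj (hadj x hx)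
            · rcases hs with rfl | rfl
              · exact hnadj (hsymm (hadj x hx))
              · exact hns hx
          rw [FP_cons_pos _ hs, FP_append, hv₀, FP_cons_pos _ hs, List.nil_append,
            List.cons.injEq] at hfv
          rw [FP_append, hv₀, List.nil_append]
          exact hfv.2
        · rw [FP_cons_neg _ hs, FP_append, FP_cons_neg _ hs, ← FP_append] at hfv
          exact hfv
    exact ((ih (v₀ ++ v₁) hinv).cons s).trans (hb.symm hsymm)

theorem weq_iff_sameInv (hsymm : Symmetric adj) (hirr : ∀ s, ¬ adj s s) {u v : List Λ} :
    WEq adj u v ↔ SameInv adj u v :=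
  ⟨fun h => sameInv_of_weq hsymm hirr h, fun h => sameInv_weq hsymm hirr u v h⟩

theorem count_mem_weq {t : Λ} {β γ : List Λ} (h : WEq adj (t :: β) γ) : t ∈ γ := by
  have := h.count t
  simp only [List.count_cons_self] at this
  exact List.count_pos_iff.mp (by omega)

/-- FP ignores erasing a letter outside the pair. -/
theorem FP_erase_of_not_pair {p q t : Λ} (l : List Λ) (h : ¬(t = p ∨ t = q)) :
    FP p q (l.erase t) = FP p q l := by
  rcases Decidable.em (t ∈ l) with hm | hm
  · obtain ⟨l₀, l₁, rfl, hn⟩ := first_split hm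
    rw [List.erase_append_right _ hn, List.erase_cons_head, FP_append, FP_append,
      FP_cons_neg _ h]
  · rw [List.erase_of_not_mem hm]

theorem FP_erase_of_pair {p q t : Λ} (l : List Λ) (h : t = p ∨ t = q) :
    FP p q (l.erase t) = (FP p q l).erase t :=
  filter_erase _ t (by simpa using h) l

theorem cancel_cons (hsymm : Symmetric adj) (hirr : ∀ s, ¬ adj s s) {s : Λ} {α β : List Λ}
    (h : WEq adj (s :: α) (s :: β)) : WEq adj α β := by
  obtain ⟨hc, hf⟩ := sameInv_of_weq hsymm hirr h
  refine sameInv_weq hsymm hirr _ _ ⟨?_, ?_⟩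
  · intro r; have := hc r; simp only [List.count_cons] at this; omega
  · intro p q hpq hn
    have hfv := hf p q hpq hn
    rcases Decidable.em (s = p ∨ s = q) with hs | hs
    · rw [FP_cons_pos _ hs, FP_cons_pos _ hs, List.cons.injEq] at hfv; exact hfv.2
    · rw [FP_cons_neg _ hs, FP_cons_neg _ hs] at hfv; exact hfv

/-- Extraction: if `t :: β ≈ γ` then `γ` with its first `t` erased is `≈ β`. -/
theorem weq_erase_of_weq_cons (hsymm : Symmetric adj) (hirr : ∀ s, ¬ adj s s)
    {t : Λ} {β γ : List Λ} (h : WEq adj (t :: β) γ) : WEq adj (γ.erase t) β := by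
  obtain ⟨hc, hf⟩ := sameInv_of_weq hsymm hirr h
  refine sameInv_weq hsymm hirr _ _ ⟨?_, ?_⟩
  · intro r
    have h1 := hc r
    have h2 := List.count_erase (a := r) (b := t) (l := γ)
    simp only [List.count_cons, beq_iff_eq] at *
    rcases Decidable.em (t = r) with rfl | hr
    · simp only [if_pos rfl] at *; omega
    · simp only [if_neg hr] at *; omega
  · intro p q hpq hn
    have hfv := (hf p q hpq hn).symm
    rcases Decidable.em (t = p ∨ t = q) with ht | ht
    · rw [FP_erase_of_pair _ ht, hfv, FP_cons_pos _ ht, List.erase_cons_head]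
    · rw [FP_erase_of_not_pair _ ht, hfv, FP_cons_neg _ ht]

/-- If `t :: β ≈ γ` then `γ ≈ t :: (γ.erase t)`. -/
theorem weq_cons_erase (hsymm : Symmetric adj) (hirr : ∀ s, ¬ adj s s)
    {t : Λ} {β γ : List Λ} (h : WEq adj (t :: β) γ) : WEq adj γ (t :: γ.erase t) :=
  (h.symm hsymm).trans (((weq_erase_of_weq_cons hsymm hirr h).cons t).symm hsymm)

/-- HEAD lemma: if `t :: β ≈ s :: u'` with `s ≠ t`, then `u' ≈ t :: (u'.erase t)`. -/
theorem head_lemma (hsymm : Symmetric adj) (hirr : ∀ s, ¬ adj s s)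
    {t s : Λ} {β u' : List Λ} (h : WEq adj (t :: β) (s :: u')) (hst : s ≠ t) :
    WEq adj u' (t :: u'.erase t) := by
  obtain ⟨hc, hf⟩ := sameInv_of_weq hsymm hirr h
  have htu : t ∈ u' := by
    have h1 := hc t
    rw [List.count_cons_self, List.count_cons_of_ne hst] at h1
    exact List.count_pos_iff.mp (by omega)
  refine sameInv_weq hsymm hirr _ _ ⟨?_, ?_⟩
  · intro r
    have h2 := List.count_erase (a := r) (b := t) (l := u')
    simp only [beq_iff_eq] at h2
    rcases Decidable.em (t = r) with rfl | hr
    · rw [if_pos rfl] at h2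
      rw [List.count_cons_self, h2]
      have : 1 ≤ u'.count t := List.count_pos_iff.mpr htu
      omega
    · rw [if_neg hr] at h2
      rw [List.count_cons_of_ne hr, h2]
      omega
  · intro p q hpq hn
    have hfv := hf p q hpq hn
    rcases Decidable.em (t = p ∨ t = q) with ht | ht
    · rcases Decidable.em (s = p ∨ s = q) with hs | hs
      · -- impossible: heads differ
        exfalso
        rw [FP_cons_pos _ ht, FP_cons_pos _ hs] at hfv
        have : t = s := by simpa using congrArg List.head? hfv
        exact hst this.symm
      · rw [FP_cons_pos _ ht, FP_cons_neg _ hs] at hfv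
        rw [FP_cons_pos _ ht, FP_erase_of_pair _ ht, ← hfv, List.erase_cons_head, hfv]
    · rw [FP_cons_neg _ ht, FP_erase_of_not_pair _ ht]

variable (adj) in
/-- Left divisibility of words up to swap equivalence. -/
def Dv (u z : List Λ) : Prop := ∃ a : List Λ, WEq adj (u ++ a) z

theorem dv_of_weq {u z : List Λ} (h : WEq adj u z) : Dv adj u z := ⟨[], by simpa⟩

theorem Dv.of_weq_left (hsymm : Symmetric adj) {u u' z : List Λ}
    (h : WEq adj u u') (hd : Dv adj u' z) : Dv adj u z := by
  obtain ⟨a, ha⟩ := hd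
  exact ⟨a, (h.append_right a).trans ha⟩

theorem Dv.weq_right {u z z' : List Λ} (h : Dv adj u z) (hz : WEq adj z z') : Dv adj u z' := by
  obtain ⟨a, ha⟩ := h; exact ⟨a, ha.trans hz⟩


section Op
variable {E : Type*} [NormedAddCommGroup E] [InnerProductSpace ℂ E] [CompleteSpace E]
variable (Vs : Λ → E →L[ℂ] E)

/-- The product of the isometries along a word. -/
def Phi (l : List Λ) : E →L[ℂ] E := (l.map Vs).prod

@[simp] theorem Phi_nil : Phi Vs [] = 1 := rfl
theorem Phi_cons (s : Λ) (l : List Λ) : Phi Vs (s :: l) = Vs s * Phi Vs l := by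
  simp [Phi]
theorem Phi_append (a b : List Λ) : Phi Vs (a ++ b) = Phi Vs a * Phi Vs b := by
  simp [Phi]

variable {Vs}
variable (hsymm : Symmetric adj) (hirr : ∀ s, ¬ adj s s)
  (hisoS : ∀ s : Λ, star (Vs s) * Vs s = 1)
  (hcommS : ∀ s t : Λ, s ≠ t → adj s t →
    Vs s * Vs t = Vs t * Vs s ∧ star (Vs s) * Vs t = Vs t * star (Vs s))
  (horthS : ∀ s t : Λ, s ≠ t → ¬ adj s t → star (Vs s) * Vs t = 0)

include hirr hcommS in
theorem Phi_weq {a b : List Λ} (h : WEq adj a b) : Phi Vs a = Phi Vs b := by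
  induction h with
  | refl => rfl
  | tail _ hst ih =>
    obtain ⟨A, B, p, q, hpq, rfl, rfl⟩ := hst
    rw [ih]
    have hne : p ≠ q := fun h => hirr p (h ▸ hpq)
    simp only [Phi_append, Phi_cons]
    rw [← mul_assoc (Vs p), (hcommS p q hne hpq).1, mul_assoc]

include hsymm hirr hisoS hcommS horthS in
theorem L1 (t : Λ) : ∀ u : List Λ,
    (∃ u₁, WEq adj u (t :: u₁) ∧ star (Phi Vs u) * Vs t = star (Phi Vs u₁)) ∨
    ((∀ x ∈ u, adj x t) ∧ star (Phi Vs u) * Vs t = Vs t * star (Phi Vs u)) ∨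
    ((∀ z, ¬(Dv adj u z ∧ Dv adj [t] z)) ∧ star (Phi Vs u) * Vs t = 0) := by
  intro u
  induction u with
  | nil =>
    refine Or.inr (Or.inl ⟨by simp, ?_⟩)
    simp
  | cons s u' ih =>
    have hexp : star (Phi Vs (s :: u')) * Vs t
        = star (Phi Vs u') * (star (Vs s) * Vs t) := by
      rw [Phi_cons, star_mul, mul_assoc]
    rcases Decidable.em (s = t) with rfl | hst
    · refine Or.inl ⟨u', WEq.refl _, ?_⟩
      rw [hexp, hisoS, mul_one]
    rcases Classical.em (adj s t) with hadj | hnadj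
    · -- s ≠ t adjacent
      have hco := (hcommS s t hst hadj).2
      rcases ih with ⟨u₁', hw, hop⟩ | ⟨hall, hop⟩ | ⟨hnc, hop⟩
      · refine Or.inl ⟨s :: u₁', ?_, ?_⟩
        · exact (hw.cons s).trans (Relation.ReflTransGen.single
            ⟨[], u₁', s, t, hadj, rfl, rfl⟩)
        · rw [hexp, hco, ← mul_assoc, hop, Phi_cons, star_mul]
      · refine Or.inr (Or.inl ⟨?_, ?_⟩)
        · intro x hx
          rcases List.mem_cons.mp hx with rfl | hx
          · exact hadj
          · exact hall x hx
        · rw [hexp, hco, ← mul_assoc, hop, Phi_cons, star_mul, mul_assoc]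
      · refine Or.inr (Or.inr ⟨?_, ?_⟩)
        · rintro z ⟨⟨a, ha⟩, ⟨b, hb⟩⟩
          have hw : WEq adj (t :: b) (s :: (u' ++ a)) :=
            WEq.trans hb (ha.symm hsymm)
          have hh := head_lemma hsymm hirr hw hst
          exact hnc (u' ++ a) ⟨⟨a, WEq.refl _⟩, ⟨(u' ++ a).erase t, hh.symm hsymm⟩⟩
        · rw [hexp, hco, ← mul_assoc, hop, zero_mul]
    · -- s ≠ t not adjacent
      refine Or.inr (Or.inr ⟨?_, ?_⟩)
      · rintro z ⟨⟨a, ha⟩, ⟨b, hb⟩⟩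
        have hw : WEq adj (s :: (u' ++ a)) (t :: b) :=
          WEq.trans ha (hb.symm hsymm)
        have := (sameInv_of_weq hsymm hirr hw).2 s t hst hnadj
        rw [FP_cons_pos _ (Or.inl rfl), FP_cons_pos _ (Or.inr rfl)] at this
        exact hst (by simpa using congrArg List.head? this)
      · rw [hexp, horthS s t hst hnadj, mul_zero]

include hsymm hirr hisoS hcommS horthS in
/-- The main lemma: either a least common multiple exists (with the Nica identity),
or there is no common multiple and the operator product vanishes. -/
theorem ML : ∀ v u : List Λ,
    (∃ w u₁ v₁ : List Λ, WEq adj (u ++ v₁) w ∧ WEq adj (v ++ u₁) w ∧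
        (∀ z, Dv adj u z → Dv adj v z → Dv adj w z) ∧
        star (Phi Vs u) * Phi Vs v = Phi Vs v₁ * star (Phi Vs u₁)) ∨
    ((∀ z, ¬(Dv adj u z ∧ Dv adj v z)) ∧ star (Phi Vs u) * Phi Vs v = 0) := by
  intro v
  induction v with
  | nil =>
    intro u
    exact Or.inl ⟨u, u, [], by rw [List.append_nil]; exact WEq.refl u, WEq.refl _, fun z h _ => h, by simp⟩
  | cons t v' ih =>
    intro u
    rcases L1 hsymm hirr hisoS hcommS horthS t u with
      ⟨u₁ₗ, hwu, hop1⟩ | ⟨hall, hop2⟩ | ⟨hnc, hop3⟩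
    · -- t is an initial letter of u
      rcases ih u₁ₗ with ⟨w', u₁', v₁', hw1, hw2, hlub, hop'⟩ | ⟨hnc', hop'⟩
      · refine Or.inl ⟨t :: w', u₁', v₁', ?_, ?_, ?_, ?_⟩
        · exact (hwu.append_right v₁').trans (hw1.cons t)
        · exact hw2.cons t
        · intro z hdu hdv
          obtain ⟨b, hb⟩ := hdv
          have hz : WEq adj z (t :: z.erase t) := weq_cons_erase hsymm hirr hb
          have hdv' : Dv adj v' (z.erase t) :=
            ⟨b, (weq_erase_of_weq_cons hsymm hirr hb).symm hsymm⟩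
          obtain ⟨a, ha⟩ := hdu
          have hta : WEq adj (t :: (u₁ₗ ++ a)) z :=
            (((hwu.symm hsymm).append_right a).trans ha)
          have hdu' : Dv adj u₁ₗ (z.erase t) :=
            ⟨a, (weq_erase_of_weq_cons hsymm hirr hta).symm hsymm⟩
          obtain ⟨c, hc⟩ := hlub _ hdu' hdv'
          exact ⟨c, (hc.cons t).trans (hz.symm hsymm)⟩
        · rw [Phi_cons, ← mul_assoc, hop1, hop']
      · refine Or.inr ⟨?_, ?_⟩
        · rintro z ⟨hdu, hdv⟩
          obtain ⟨b, hb⟩ := hdv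
          have hdv' : Dv adj v' (z.erase t) :=
            ⟨b, (weq_erase_of_weq_cons hsymm hirr hb).symm hsymm⟩
          obtain ⟨a, ha⟩ := hdu
          have hta : WEq adj (t :: (u₁ₗ ++ a)) z :=
            (((hwu.symm hsymm).append_right a).trans ha)
          have hdu' : Dv adj u₁ₗ (z.erase t) :=
            ⟨a, (weq_erase_of_weq_cons hsymm hirr hta).symm hsymm⟩
          exact hnc' _ ⟨hdu', hdv'⟩
        · rw [Phi_cons, ← mul_assoc, hop1, hop']
    · -- every letter of u is adjacent to t
      have htnu : t ∉ u := fun hm => hirr t (hall t hm)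
      rcases ih u with ⟨w', u₁', v₁', hw1, hw2, hlub, hop'⟩ | ⟨hnc', hop'⟩
      · refine Or.inl ⟨t :: w', u₁', t :: v₁', ?_, ?_, ?_, ?_⟩
        · exact (bubble hall).trans (hw1.cons t)
        · exact hw2.cons t
        · intro z hdu hdv
          obtain ⟨b, hb⟩ := hdv
          have hz : WEq adj z (t :: z.erase t) := weq_cons_erase hsymm hirr hb
          have hdv' : Dv adj v' (z.erase t) :=
            ⟨b, (weq_erase_of_weq_cons hsymm hirr hb).symm hsymm⟩
          obtain ⟨a, ha⟩ := hdu
          have hta : WEq adj (t :: z.erase t) (u ++ a) :=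
            (hz.symm hsymm).trans (ha.symm hsymm)
          have h2 := weq_erase_of_weq_cons hsymm hirr hta
          rw [List.erase_append_right _ htnu] at h2
          have hdu' : Dv adj u (z.erase t) := ⟨a.erase t, h2⟩
          obtain ⟨c, hc⟩ := hlub _ hdu' hdv'
          exact ⟨c, (hc.cons t).trans (hz.symm hsymm)⟩
        · rw [Phi_cons, ← mul_assoc, hop2, mul_assoc, hop', ← mul_assoc, ← Phi_cons]
      · refine Or.inr ⟨?_, ?_⟩
        · rintro z ⟨hdu, hdv⟩
          obtain ⟨b, hb⟩ := hdv
          have hz : WEq adj z (t :: z.erase t) := weq_cons_erase hsymm hirr hb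
          have hdv' : Dv adj v' (z.erase t) :=
            ⟨b, (weq_erase_of_weq_cons hsymm hirr hb).symm hsymm⟩
          obtain ⟨a, ha⟩ := hdu
          have hta : WEq adj (t :: z.erase t) (u ++ a) :=
            (hz.symm hsymm).trans (ha.symm hsymm)
          have h2 := weq_erase_of_weq_cons hsymm hirr hta
          rw [List.erase_append_right _ htnu] at h2
          exact hnc' _ ⟨⟨a.erase t, h2⟩, hdv'⟩
        · rw [Phi_cons, ← mul_assoc, hop2, mul_assoc, hop', mul_zero]
    · -- no common multiple with t
      refine Or.inr ⟨?_, ?_⟩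
      · rintro z ⟨hdu, hdv⟩
        obtain ⟨b, hb⟩ := hdv
        exact hnc z ⟨hdu, ⟨v' ++ b, by simpa using hb⟩⟩
      · rw [Phi_cons, ← mul_assoc, hop3, zero_mul]

end Op
end CL
namespace CL
section Grp
variable {Λ : Type u} [DecidableEq Λ] (adj : Λ → Λ → Prop)

/-- The canonical generator of the RAAG at vertex `s`. -/
def S (s : Λ) : Raag adj :=
  mkOf adj (fun _ : Λ => Multiplicative ℤ) (I := s) (Multiplicative.ofAdd 1)

/-- Evaluation of a positive word in the RAAG. -/
def piW (l : List Λ) : Raag adj := (l.map (S adj)).prod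

@[simp] theorem piW_nil : piW adj [] = 1 := rfl
theorem piW_cons (s : Λ) (l : List Λ) : piW adj (s :: l) = S adj s * piW adj l := by
  simp [piW]
theorem piW_append (a b : List Λ) : piW adj (a ++ b) = piW adj a * piW adj b := by
  simp [piW]

theorem S_comm (hsymm : Symmetric adj) {s t : Λ} (h : adj s t) :
    S adj s * S adj t = S adj t * S adj s := by
  show (QuotientGroup.mk _ : Raag adj) * QuotientGroup.mk _
      = QuotientGroup.mk _ * QuotientGroup.mk _
  erw [← QuotientGroup.mk_mul, ← QuotientGroup.mk_mul, QuotientGroup.eq]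
  apply Subgroup.subset_normalClosure
  refine ⟨t, s, (Multiplicative.ofAdd 1)⁻¹, (Multiplicative.ofAdd 1)⁻¹, hsymm h, ?_⟩
  simp only [map_inv]
  group

variable {adj}

theorem piW_weq (hsymm : Symmetric adj) {a b : List Λ} (h : WEq adj a b) :
    piW adj a = piW adj b := by
  induction h with
  | refl => rfl
  | tail _ hst ih =>
    obtain ⟨A, B, p, q, hpq, rfl, rfl⟩ := hst
    rw [ih]
    simp only [piW_append, piW_cons]
    rw [← mul_assoc (S adj p), S_comm adj hsymm hpq, mul_assoc]

variable (adj)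

/-- The exponent-sum homomorphism at the vertex `r`. -/
noncomputable def cntHom (r : Λ) : Raag adj →* Multiplicative ℤ :=
  QuotientGroup.lift _
    (Monoid.CoprodI.lift (fun I : Λ =>
      if I = r then MonoidHom.id (Multiplicative ℤ) else 1))
    (by
      intro x hx
      refine Subgroup.normalClosure_le_normal ?_ hx
      rintro g ⟨I, J, a, b, hadj, rfl⟩
      simp only [SetLike.mem_coe, MonoidHom.mem_ker, map_mul, map_inv]
      have key : ∀ A B : Multiplicative ℤ, A * B * A⁻¹ * B⁻¹ = 1 := by
        intro A B; rw [mul_comm A B]; group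
      exact key _ _)

theorem cntHom_S (r s : Λ) :
    cntHom adj r (S adj s) = if s = r then Multiplicative.ofAdd 1 else 1 := by
  rw [show cntHom adj r (S adj s)
      = (Monoid.CoprodI.lift (fun I : Λ =>
          if I = r then MonoidHom.id (Multiplicative ℤ) else 1))
        (Monoid.CoprodI.of (i := s) (Multiplicative.ofAdd 1)) from rfl,
    Monoid.CoprodI.lift_of]
  rcases Decidable.em (s = r) with rfl | hs
  · simp
  · simp [hs]

theorem cntHom_piW (r : Λ) (l : List Λ) :
    cntHom adj r (piW adj l) = Multiplicative.ofAdd (l.count r : ℤ) := by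
  induction l with
  | nil => simp
  | cons s l ih =>
    rw [piW_cons, map_mul, cntHom_S, ih]
    rcases Decidable.em (s = r) with rfl | hs
    · rw [if_pos rfl, List.count_cons_self, ← ofAdd_add]
      congr 1
      push_cast
      ring
    · rw [if_neg hs, List.count_cons_of_ne hs, one_mul]

/-- The generator of `FreeGroup Bool` associated to a vertex w.r.t. a pair `(p,q)`. -/
noncomputable def pairGen (p q x : Λ) : FreeGroup Bool :=
  if x = p then FreeGroup.of false else if x = q then FreeGroup.of true else 1

theorem pairGen_comm (hsymm : Symmetric adj) {p q : Λ} (hpq : ¬ adj p q) {I J : Λ}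
    (h : adj I J) : Commute (pairGen p q I) (pairGen p q J) := by
  rcases Decidable.em (I = J) with rfl | hij
  · exact Commute.refl _
  unfold pairGen
  rcases Decidable.em (I = p) with rfl | h1
  · rw [if_pos rfl, if_neg (fun h' => hij h'.symm)]
    rcases Decidable.em (J = q) with rfl | h3
    · exact absurd h hpq
    · rw [if_neg h3]; exact Commute.one_right _
  · rw [if_neg h1]
    rcases Decidable.em (I = q) with rfl | h4
    · rw [if_pos rfl]
      rcases Decidable.em (J = p) with rfl | h5
      · exact absurd (hsymm h) hpq
      · rw [if_neg h5, if_neg (fun h' => hij h'.symm)]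
        exact Commute.one_right _
    · rw [if_neg h4]; exact Commute.one_left _

/-- The projection homomorphism onto the free group for a non-adjacent pair. -/
noncomputable def fpHom (hsymm : Symmetric adj) (p q : Λ) (hpq : ¬ adj p q) :
    Raag adj →* FreeGroup Bool :=
  QuotientGroup.lift _
    (Monoid.CoprodI.lift (fun I : Λ => zpowersHom _ (pairGen p q I)))
    (by
      intro x hx
      refine Subgroup.normalClosure_le_normal ?_ hx
      rintro g ⟨I, J, a, b, hadj, rfl⟩
      simp only [SetLike.mem_coe, MonoidHom.mem_ker, map_mul, map_inv,
        Monoid.CoprodI.lift_of, zpowersHom_apply]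
      have hc : Commute ((pairGen p q I) ^ (Multiplicative.toAdd a))
          ((pairGen p q J) ^ (Multiplicative.toAdd b)) :=
        (pairGen_comm adj hsymm hpq hadj).zpow_zpow _ _
      rw [hc.eq]
      group)

theorem fpHom_S (hsymm : Symmetric adj) (p q : Λ) (hpq : ¬ adj p q) (s : Λ) :
    fpHom adj hsymm p q hpq (S adj s) = pairGen p q s := by
  rw [show fpHom adj hsymm p q hpq (S adj s)
      = (Monoid.CoprodI.lift (fun I : Λ => zpowersHom _ (pairGen p q I)))
        (Monoid.CoprodI.of (i := s) (Multiplicative.ofAdd 1)) from rfl,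
    Monoid.CoprodI.lift_of, zpowersHom_apply]
  simp

theorem fpHom_piW (hsymm : Symmetric adj) (p q : Λ) (hpq' : p ≠ q) (hpq : ¬ adj p q)
    (l : List Λ) :
    fpHom adj hsymm p q hpq (piW adj l)
      = ((FP p q l).map (fun x => FreeGroup.of (decide (x = q)))).prod := by
  induction l with
  | nil => simp [FP]
  | cons s l ih =>
    rw [piW_cons, map_mul, fpHom_S, ih]
    rcases Decidable.em (s = p) with rfl | h1
    · rw [FP_cons_pos _ (Or.inl rfl)]
      simp only [List.map_cons, List.prod_cons]
      congr 1
      rw [pairGen, if_pos rfl]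
      simp [hpq']
    · rcases Decidable.em (s = q) with rfl | h2
      · rw [FP_cons_pos _ (Or.inr rfl)]
        simp only [List.map_cons, List.prod_cons]
        congr 1
        rw [pairGen, if_neg h1, if_pos rfl]
        simp
      · rw [FP_cons_neg _ (by tauto)]
        rw [pairGen, if_neg h1, if_neg h2, one_mul]

end Grp
end CL
namespace CL
section Emb
variable {Λ : Type u} [DecidableEq Λ]

theorem reduce_pos (l : List Bool) :
    FreeGroup.reduce (l.map (fun b => (b, true))) = l.map (fun b => (b, true)) := by
  induction l with
  | nil => rfl
  | cons b l ih =>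
    rw [List.map_cons, FreeGroup.reduce.cons, ih]
    cases l with
    | nil => rfl
    | cons c l' => simp

theorem prod_of_eq_mk (l : List Bool) :
    (l.map FreeGroup.of).prod = FreeGroup.mk (l.map (fun b => (b, true))) := by
  induction l with
  | nil => rw [List.map_nil, List.prod_nil, List.map_nil, FreeGroup.one_eq_mk]
  | cons b l ih =>
    rw [List.map_cons, List.prod_cons, ih, List.map_cons,
      show (FreeGroup.of b : FreeGroup Bool) = FreeGroup.mk [(b, true)] from rfl,
      FreeGroup.mul_mk, List.singleton_append]

theorem fg_pos_inj {l₁ l₂ : List Bool}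
    (h : (l₁.map FreeGroup.of).prod = (l₂.map FreeGroup.of).prod) : l₁ = l₂ := by
  rw [prod_of_eq_mk, prod_of_eq_mk] at h
  have h2 := congrArg FreeGroup.toWord h
  rw [FreeGroup.toWord_mk, FreeGroup.toWord_mk, reduce_pos, reduce_pos] at h2
  exact List.map_injective_iff.mpr (fun a b hab => by simpa using hab) h2

theorem pair_list_inj {p q : Λ} (hpq : p ≠ q) :
    ∀ l₁ l₂ : List Λ, (∀ x ∈ l₁, x = p ∨ x = q) → (∀ x ∈ l₂, x = p ∨ x = q) →
      l₁.map (fun x => decide (x = q)) = l₂.map (fun x => decide (x = q)) → l₁ = l₂ := by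
  intro l₁
  induction l₁ with
  | nil =>
    intro l₂ _ _ h
    cases l₂ with
    | nil => rfl
    | cons b l₂' => simp at h
  | cons a l ih =>
    intro l₂ h1 h2 h
    cases l₂ with
    | nil => simp at h
    | cons b l₂' =>
      simp only [List.map_cons, List.cons.injEq] at h
      have hab : a = b := by
        rcases h1 a (List.mem_cons_self (a := a) (l := l)) with rfl | rfl <;>
          rcases h2 b (List.mem_cons_self (a := b) (l := l₂')) with rfl | rfl
        · rfl
        · exact absurd h.1 (by simp [hpq])
        · exact absurd h.1 (by simp [hpq])
        · rfl
      rw [hab, ih l₂' (fun x hx => h1 x (List.mem_cons_of_mem a hx))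
        (fun x hx => h2 x (List.mem_cons_of_mem b hx)) h.2]

variable (adj : Λ → Λ → Prop)

/-- Key embedding theorem: equal evaluations in the RAAG imply swap equivalence. -/
theorem piW_inj (hsymm : Symmetric adj) (hirr : ∀ s, ¬ adj s s) {u v : List Λ}
    (h : piW adj u = piW adj v) : WEq adj u v := by
  refine sameInv_weq hsymm hirr _ _ ⟨?_, ?_⟩
  · intro r
    have hc := congrArg (cntHom adj r) h
    rw [cntHom_piW, cntHom_piW] at hc
    have h2 : (u.count r : ℤ) = (v.count r : ℤ) := Multiplicative.ofAdd.injective hc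
    exact_mod_cast h2
  · intro p q hpq hn
    have hf := congrArg (fpHom adj hsymm p q hn) h
    rw [fpHom_piW adj hsymm p q hpq hn, fpHom_piW adj hsymm p q hpq hn] at hf
    have h3 : (FP p q u).map (fun x => decide (x = q))
        = (FP p q v).map (fun x => decide (x = q)) := by
      apply fg_pos_inj
      rw [List.map_map, List.map_map]
      exact hf
    exact pair_list_inj hpq _ _ (fun x hx => (mem_FP.mp hx).2)
      (fun x hx => (mem_FP.mp hx).2) h3

/-- `mkOf` as a homomorphism from the factor. -/
def mkOfHom (I : Λ) : Multiplicative ℤ →* Raag adj :=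
  (QuotientGroup.mk' _).comp
    (Monoid.CoprodI.of (M := fun _ : Λ => Multiplicative ℤ) (i := I))

theorem mkOfHom_apply (I : Λ) (g : Multiplicative ℤ) :
    mkOfHom adj I g = mkOf adj (fun _ : Λ => Multiplicative ℤ) (I := I) g := rfl

theorem mem_cone_iff {x : Raag adj} :
    x ∈ RaagCone adj ↔ ∃ l : List Λ, piW adj l = x := by
  constructor
  · intro hx
    refine Submonoid.closure_induction ?_ ?_ ?_ hx
    · rintro g ⟨I, pp, hp, rfl⟩
      refine ⟨List.replicate (Multiplicative.toAdd pp).toNat I, ?_⟩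
      have hrep : piW adj (List.replicate (Multiplicative.toAdd pp).toNat I)
          = (S adj I) ^ (Multiplicative.toAdd pp).toNat := by
        rw [piW, List.map_replicate, List.prod_replicate]
      rw [hrep]
      have hS : S adj I = mkOfHom adj I (Multiplicative.ofAdd 1) := rfl
      rw [hS, ← map_pow]
      congr 1
      have h0 : (0:ℤ) ≤ Multiplicative.toAdd pp := hp
      rw [← ofAdd_nsmul]
      simp only [nsmul_eq_mul, mul_one]
      rw [Int.toNat_of_nonneg h0]
      rfl
    · exact ⟨[], rfl⟩
    · rintro x y - - ⟨l₁, rfl⟩ ⟨l₂, rfl⟩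
      exact ⟨l₁ ++ l₂, (piW_append adj l₁ l₂)⟩
  · rintro ⟨l, rfl⟩
    induction l with
    | nil => exact one_mem _
    | cons s l ih =>
      rw [piW_cons]
      refine mul_mem ?_ ih
      exact Submonoid.subset_closure
        ⟨s, Multiplicative.ofAdd 1, ofAdd_one_mem_natCone, rfl⟩

end Emb
end CL
/-- part of Theorem 5.3. Let `Γ` be a simplicial graph on `Λ` and let
`{V_s : s ∈ Λ}` be isometries on a Hilbert space such that `V_s` and `V_t` `*`-commute
when `s` and `t` are adjacent and have orthogonal ranges (`V_s^* V_t = 0`) when `s ≠ t`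
are not adjacent.  Then `s ↦ V_s` extends to a covariant isometric representation of the
right-angled Artin monoid `A_M^+` associated to `Γ`. -/
theorem raag_isometries_extend_to_covariant_rep
    {E : Type*} [NormedAddCommGroup E] [InnerProductSpace ℂ E] [CompleteSpace E]
    {Λ : Type u} (adj : Λ → Λ → Prop)
    (hsymm : Symmetric adj) (hirr : ∀ s : Λ, ¬ adj s s)
    (Vs : Λ → (E →L[ℂ] E))
    (hiso : ∀ s : Λ, ContinuousLinearMap.adjoint (Vs s) * Vs s = 1)
    (hcomm : ∀ s t : Λ, s ≠ t → adj s t →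
      Vs s * Vs t = Vs t * Vs s ∧
      ContinuousLinearMap.adjoint (Vs s) * Vs t = Vs t * ContinuousLinearMap.adjoint (Vs s))
    (horth : ∀ s t : Λ, s ≠ t → ¬ adj s t →
      ContinuousLinearMap.adjoint (Vs s) * Vs t = 0) :
    ∃ W : ↥(RaagCone adj) → (E →L[ℂ] E),
      IsIsomRep (RaagCone adj) W ∧ IsCovariantRep (RaagCone adj) W ∧
      ∀ s : Λ, W (raagGen adj s) = Vs s := by
  classical
  have hisoS : ∀ s : Λ, star (Vs s) * Vs s = 1 := by
    intro s; rw [ContinuousLinearMap.star_eq_adjoint]; exact hiso s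
  have hcommS : ∀ s t : Λ, s ≠ t → adj s t →
      Vs s * Vs t = Vs t * Vs s ∧ star (Vs s) * Vs t = Vs t * star (Vs s) := by
    intro s t h1 h2
    exact ⟨(hcomm s t h1 h2).1, by
      rw [ContinuousLinearMap.star_eq_adjoint]; exact (hcomm s t h1 h2).2⟩
  have horthS : ∀ s t : Λ, s ≠ t → ¬ adj s t → star (Vs s) * Vs t = 0 := by
    intro s t h1 h2; rw [ContinuousLinearMap.star_eq_adjoint]; exact horth s t h1 h2
  have memP : ∀ x : ↥(RaagCone adj), ∃ l : List Λ, CL.piW adj l = (x : Raag adj) :=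
    fun x => (CL.mem_cone_iff adj).mp x.2
  choose wd hwd using memP
  have key : ∀ l l' : List Λ, CL.piW adj l = CL.piW adj l' →
      CL.Phi Vs l = CL.Phi Vs l' :=
    fun l l' h => CL.Phi_weq hirr hcommS (CL.piW_inj adj hsymm hirr h)
  have phiIso : ∀ l : List Λ, star (CL.Phi Vs l) * CL.Phi Vs l = 1 := by
    intro l
    induction l with
    | nil => simp
    | cons s l ih =>
      rw [CL.Phi_cons, star_mul, mul_assoc, ← mul_assoc (star (Vs s)), hisoS s,
        one_mul, ih]
  refine ⟨fun x => CL.Phi Vs (wd x), ⟨?_, ?_, ?_⟩, ?_, ?_⟩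
  · -- unit
    show CL.Phi Vs (wd 1) = 1
    have : CL.piW adj (wd 1) = CL.piW adj [] := by
      rw [hwd]; simp
    rw [key _ _ this]
    rfl
  · -- multiplicativity
    intro x y
    show CL.Phi Vs (wd (x * y)) = CL.Phi Vs (wd x) * CL.Phi Vs (wd y)
    have : CL.piW adj (wd (x * y)) = CL.piW adj (wd x ++ wd y) := by
      rw [hwd, CL.piW_append, hwd, hwd]
      rfl
    rw [key _ _ this, CL.Phi_append]
  · -- isometry
    intro x
    rw [← ContinuousLinearMap.star_eq_adjoint]
    exact phiIso (wd x)
  · -- covariance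
    intro x y
    constructor
    · intro hnub
      rcases CL.ML hsymm hirr hisoS hcommS horthS (wd y) (wd x) with
        ⟨w, u₁, v₁, hw1, hw2, hlub, hop⟩ | ⟨hnc, hop⟩
      · exfalso
        apply hnub
        refine ⟨CL.piW adj w, ?_, ?_⟩
        · show (↑x)⁻¹ * CL.piW adj w ∈ RaagCone adj
          have hww : CL.piW adj w = ↑x * CL.piW adj v₁ := by
            rw [← CL.piW_weq hsymm hw1, CL.piW_append, hwd]
          rw [hww, inv_mul_cancel_left]
          exact (CL.mem_cone_iff adj).mpr ⟨v₁, rfl⟩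
        · show (↑y)⁻¹ * CL.piW adj w ∈ RaagCone adj
          have hww : CL.piW adj w = ↑y * CL.piW adj u₁ := by
            rw [← CL.piW_weq hsymm hw2, CL.piW_append, hwd]
          rw [hww, inv_mul_cancel_left]
          exact (CL.mem_cone_iff adj).mpr ⟨u₁, rfl⟩
      · show CL.Phi Vs (wd x) * ContinuousLinearMap.adjoint (CL.Phi Vs (wd x)) *
            (CL.Phi Vs (wd y) * ContinuousLinearMap.adjoint (CL.Phi Vs (wd y))) = 0
        rw [← ContinuousLinearMap.star_eq_adjoint, ← ContinuousLinearMap.star_eq_adjoint,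
          mul_assoc, ← mul_assoc (star (CL.Phi Vs (wd x))), hop, zero_mul, mul_zero]
    · intro m hm
      rcases CL.ML hsymm hirr hisoS hcommS horthS (wd y) (wd x) with
        ⟨w, u₁, v₁, hw1, hw2, hlub, hop⟩ | ⟨hnc, hop⟩
      · -- piW w = m
        have hdx : CL.Dv adj (wd x) (wd m) := by
          obtain ⟨a, ha⟩ := (CL.mem_cone_iff adj).mp hm.1
          refine ⟨a, CL.piW_inj adj hsymm hirr ?_⟩
          rw [CL.piW_append, hwd, ha, mul_inv_cancel_left, hwd]
        have hdy : CL.Dv adj (wd y) (wd m) := by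
          obtain ⟨a, ha⟩ := (CL.mem_cone_iff adj).mp hm.2.1
          refine ⟨a, CL.piW_inj adj hsymm hirr ?_⟩
          rw [CL.piW_append, hwd, ha, mul_inv_cancel_left, hwd]
        obtain ⟨c, hc⟩ := hlub (wd m) hdx hdy
        have hcm : CL.piW adj w * CL.piW adj c = ↑m := by
          rw [← CL.piW_append, CL.piW_weq hsymm hc, hwd]
        have hxw : CL.piW adj w = ↑x * CL.piW adj v₁ := by
          rw [← CL.piW_weq hsymm hw1, CL.piW_append, hwd]
        have hyw : CL.piW adj w = ↑y * CL.piW adj u₁ := by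
          rw [← CL.piW_weq hsymm hw2, CL.piW_append, hwd]
        have hmw : lle (RaagCone adj) (↑m) (CL.piW adj w) := by
          refine hm.2.2 _ ?_ ?_
          · show (↑x)⁻¹ * CL.piW adj w ∈ RaagCone adj
            rw [hxw, inv_mul_cancel_left]
            exact (CL.mem_cone_iff adj).mpr ⟨v₁, rfl⟩
          · show (↑y)⁻¹ * CL.piW adj w ∈ RaagCone adj
            rw [hyw, inv_mul_cancel_left]
            exact (CL.mem_cone_iff adj).mpr ⟨u₁, rfl⟩
        obtain ⟨b, hb⟩ := (CL.mem_cone_iff adj).mp hmw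
        have hbc : CL.piW adj (b ++ c) = CL.piW adj [] := by
          rw [CL.piW_append, CL.piW_nil, hb, mul_assoc, hcm]
          simp
        have hc0 : c = [] := by
          have := (CL.piW_inj adj hsymm hirr hbc).length
          simp only [List.length_append, List.length_nil] at this
          exact List.length_eq_zero_iff.mp (by omega)
        have hwm : CL.piW adj w = (↑m : Raag adj) := by
          rw [hc0] at hcm
          simpa using hcm
        have hphi : CL.Phi Vs (wd m) = CL.Phi Vs w := key _ _ (by rw [hwd, ← hwm])
        show CL.Phi Vs (wd x) * ContinuousLinearMap.adjoint (CL.Phi Vs (wd x)) *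
            (CL.Phi Vs (wd y) * ContinuousLinearMap.adjoint (CL.Phi Vs (wd y)))
            = CL.Phi Vs (wd m) * ContinuousLinearMap.adjoint (CL.Phi Vs (wd m))
        rw [← ContinuousLinearMap.star_eq_adjoint, ← ContinuousLinearMap.star_eq_adjoint,
          ← ContinuousLinearMap.star_eq_adjoint]
        rw [mul_assoc, ← mul_assoc (star (CL.Phi Vs (wd x))), hop]
        rw [mul_assoc (CL.Phi Vs v₁), ← mul_assoc (CL.Phi Vs (wd x)), ← star_mul,
          ← CL.Phi_append, ← CL.Phi_append]
        rw [key _ _ (CL.piW_weq hsymm hw1 : CL.piW adj (wd x ++ v₁) = CL.piW adj w),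
          key _ _ (CL.piW_weq hsymm hw2 : CL.piW adj (wd y ++ u₁) = CL.piW adj w), hphi]
      · -- contradiction: m is a common multiple
        exfalso
        have hdx : CL.Dv adj (wd x) (wd m) := by
          obtain ⟨a, ha⟩ := (CL.mem_cone_iff adj).mp hm.1
          refine ⟨a, CL.piW_inj adj hsymm hirr ?_⟩
          rw [CL.piW_append, hwd, ha, mul_inv_cancel_left, hwd]
        have hdy : CL.Dv adj (wd y) (wd m) := by
          obtain ⟨a, ha⟩ := (CL.mem_cone_iff adj).mp hm.2.1
          refine ⟨a, CL.piW_inj adj hsymm hirr ?_⟩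
          rw [CL.piW_append, hwd, ha, mul_inv_cancel_left, hwd]
        exact hnc (wd m) ⟨hdx, hdy⟩
  · -- generators
    intro s
    show CL.Phi Vs (wd (raagGen adj s)) = Vs s
    have : CL.piW adj (wd (raagGen adj s)) = CL.piW adj [s] := by
      rw [hwd]
      show (raagGen adj s : Raag adj) = CL.piW adj [s]
      show mkOf adj (fun _ : Λ => Multiplicative ℤ) (I := s) (Multiplicative.ofAdd 1)
        = CL.piW adj [s]
      simp [CL.piW, CL.S]
      exact (mul_one _).symm
    rw [key _ _ this]
    simp [CL.Phi]
end

section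
/- For a partially ordered group (G,P) the following are equivalent: (i) (G,P) is lattice ordered, i.e. every pair of elements of G has a least upper bound; (ii) (G,P) is quasi-lattice ordered and G = PP⁻¹; (iii) (G,P) is quasi-lattice ordered, P generates G as a group, and aP ∩ bP ≠ ∅ for all a, b ∈ P. -/
/-!
Everything reduces to the identity `HasUB P x y ↔ x⁻¹ * y ∈ P P⁻¹`: a common upper bound `z`
gives `x⁻¹ * y = (x⁻¹ * z) * (y⁻¹ * z)⁻¹`, and conversely `x * u` bounds both when
`x⁻¹ * y = u * v⁻¹`. So "lattice ordered" is "quasi-lattice ordered with `H = P P⁻¹`".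
For (iii), the right Ore condition `aP ∩ bP ≠ ∅` is exactly what makes `P P⁻¹` closed under
multiplication (rewrite `v⁻¹ * s` as `p * q⁻¹` where `v * p = s * q`), so `P P⁻¹` is then the
subgroup generated by `P`.
-/

section Ore

variable {H : Type*} [Group H] (P : Submonoid H)

theorem hasUB_iff_exists_mul_inv {x y : H} :
    HasUB P x y ↔ ∃ u ∈ P, ∃ v ∈ P, x⁻¹ * y = u * v⁻¹ := by
  constructor
  · rintro ⟨z, hxz, hyz⟩
    exact ⟨_, hxz, _, hyz, by group⟩
  · rintro ⟨u, hu, v, hv, huv⟩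
    have hyxu : y⁻¹ * (x * u) = v := by
      have hy : y = x * (u * v⁻¹) := by rw [← huv, mul_inv_cancel_left]
      rw [hy]
      group
    exact ⟨x * u, by simpa [lle] using hu, by rwa [lle, hyxu]⟩

namespace Submonoid

theorem closure_eq_top_of_forall_mul_inv (hP : ∀ x : H, ∃ u ∈ P, ∃ v ∈ P, x = u * v⁻¹) :
    Subgroup.closure (P : Set H) = ⊤ := by
  refine eq_top_iff.mpr fun x _ => ?_
  obtain ⟨u, hu, v, hv, rfl⟩ := hP x
  exact mul_mem (Subgroup.subset_closure hu) (inv_mem (Subgroup.subset_closure hv))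

theorem exists_mul_eq_mul_of_forall_mul_inv
    (hP : ∀ x : H, ∃ u ∈ P, ∃ v ∈ P, x = u * v⁻¹) (a b : H) :
    ∃ p ∈ P, ∃ q ∈ P, a * p = b * q := by
  obtain ⟨u, hu, v, hv, huv⟩ := hP (a⁻¹ * b)
  refine ⟨u, hu, v, hv, ?_⟩
  have hb : b = a * (u * v⁻¹) := by rw [← huv, mul_inv_cancel_left]
  rw [hb]
  group

def mulInvSubgroup (hore : ∀ a ∈ P, ∀ b ∈ P, ∃ p ∈ P, ∃ q ∈ P, a * p = b * q) :
    Subgroup H where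
  carrier := {x | ∃ u ∈ P, ∃ v ∈ P, x = u * v⁻¹}
  one_mem' := ⟨1, P.one_mem, 1, P.one_mem, by group⟩
  mul_mem' := by
    rintro _ _ ⟨u, hu, v, hv, rfl⟩ ⟨s, hs, t, ht, rfl⟩
    obtain ⟨p, hp, q, hq, hpq⟩ := hore v hv s hs
    have hvs : v⁻¹ * s = p * q⁻¹ := by
      rw [inv_mul_eq_iff_eq_mul, ← mul_assoc, hpq, mul_inv_cancel_right]
    refine ⟨u * p, mul_mem hu hp, t * q, mul_mem ht hq, ?_⟩
    calc u * v⁻¹ * (s * t⁻¹) = u * (v⁻¹ * s) * t⁻¹ := by group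
      _ = u * p * (t * q)⁻¹ := by rw [hvs]; group
  inv_mem' := by
    rintro _ ⟨u, hu, v, hv, rfl⟩
    exact ⟨v, hv, u, hu, by group⟩

theorem forall_mul_inv_of_closure_eq_top (hcl : Subgroup.closure (P : Set H) = ⊤)
    (hore : ∀ a ∈ P, ∀ b ∈ P, ∃ p ∈ P, ∃ q ∈ P, a * p = b * q) (x : H) :
    ∃ u ∈ P, ∃ v ∈ P, x = u * v⁻¹ := by
  have hle : Subgroup.closure (P : Set H) ≤ P.mulInvSubgroup hore :=
    (Subgroup.closure_le _).mpr fun p hp => ⟨p, hp, 1, P.one_mem, by group⟩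
  exact hle (hcl ▸ Subgroup.mem_top x)

end Submonoid

end Ore

theorem lattice_order_tfae_general {H : Type*} [Group H] (P : Submonoid H) :
    [ (∀ x y : H, ∃ m, IsLub' P x y m),
      ((∀ x y : H, HasUB P x y → ∃ m, IsLub' P x y m) ∧
        ∀ x : H, ∃ u ∈ P, ∃ v ∈ P, x = u * v⁻¹),
      ((∀ x y : H, HasUB P x y → ∃ m, IsLub' P x y m) ∧
        Subgroup.closure (P : Set H) = ⊤ ∧
        ∀ a ∈ P, ∀ b ∈ P, ∃ p ∈ P, ∃ q ∈ P, a * p = b * q) ].TFAE := by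
  tfae_have 1 → 2 := fun hlub => by
    refine ⟨fun x y _ => hlub x y, fun x => ?_⟩
    obtain ⟨m, h1m, hxm, -⟩ := hlub 1 x
    simpa using (hasUB_iff_exists_mul_inv P).mp ⟨m, h1m, hxm⟩
  tfae_have 2 → 1 := fun ⟨hqlo, hP⟩ x y =>
    hqlo x y ((hasUB_iff_exists_mul_inv P).mpr (hP (x⁻¹ * y)))
  tfae_have 2 → 3 := fun ⟨hqlo, hP⟩ =>
    ⟨hqlo, P.closure_eq_top_of_forall_mul_inv hP,
      fun a _ b _ => P.exists_mul_eq_mul_of_forall_mul_inv hP a b⟩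
  tfae_have 3 → 2 := fun ⟨hqlo, hcl, hore⟩ =>
    ⟨hqlo, P.forall_mul_inv_of_closure_eq_top hcl hore⟩
  tfae_finish

/-- Lemma 6.2. For a partially ordered group `(H,P)` the following
are equivalent: (i) `(H,P)` is lattice ordered (every pair of elements of `H` has a
least upper bound); (ii) `(H,P)` is quasi-lattice ordered and `H = PP⁻¹`; (iii) `(H,P)`
is quasi-lattice ordered, `P` generates `H` as a group, and `aP ∩ bP ≠ ∅` for all
`a, b ∈ P`. -/
theorem lattice_order_tfae {H : Type*} [Group H] (P : Submonoid H)
    (hpo : IsPoGroup P) :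
    [ (∀ x y : H, ∃ m, IsLub' P x y m),
      ((∀ x y : H, HasUB P x y → ∃ m, IsLub' P x y m) ∧
        ∀ x : H, ∃ u ∈ P, ∃ v ∈ P, x = u * v⁻¹),
      ((∀ x y : H, HasUB P x y → ∃ m, IsLub' P x y m) ∧
        Subgroup.closure (P : Set H) = ⊤ ∧
        ∀ a ∈ P, ∀ b ∈ P, ∃ p ∈ P, ∃ q ∈ P, a * p = b * q) ].TFAE :=
  lattice_order_tfae_general P
end

section
/- Let (G,P) be a lattice ordered group and let W denote the left regular representation of P on ℓ²(P), defined by W_x ε_y = ε_{xy} on the orthonormal basis {ε_y : y ∈ P}. If ‖ Σ_{s∈P} λ_s W_s ‖ = Σ_{s∈P} λ_s for every finitely supported nonnegative function λ on P, then G is an amenable group. -/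
/-- A discrete group `G` is amenable if there is a left-invariant mean on `ℓ∞(G)`:
a positive linear functional `μ` on the bounded (automatically continuous, for the
discrete topology) real functions on `G` with `μ(1) = 1` and `μ(g·f) = μ(f)`. -/
def IsAmenable (G : Type*) [Group G] : Prop :=
  letI : TopologicalSpace G := ⊥
  haveI : DiscreteTopology G := ⟨rfl⟩
  ∃ μ : BoundedContinuousFunction G ℝ →ₗ[ℝ] ℝ,
    (∀ f : BoundedContinuousFunction G ℝ, (∀ x, 0 ≤ f x) → 0 ≤ μ f) ∧
    μ 1 = 1 ∧
    ∀ (g : G) (f : BoundedContinuousFunction G ℝ),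
      μ (f.compContinuous ⟨fun x => g * x, continuous_of_discreteTopology⟩) = μ f

/-- The standard orthonormal basis vector `ε_y` of `ℓ²(P)`. -/
noncomputable def epsilonVec {P : Type*} (y : P) : lp (fun _ : P => ℂ) 2 :=
  letI := Classical.decEq P
  lp.single 2 y 1



open scoped ENNReal
open Classical



namespace AmenAux

variable {G : Type*} [Group G] {P : Submonoid G}

/-- Evaluation at a coordinate, as a continuous linear map on `ℓ²(P)`. -/
noncomputable def evalCLM (z : ↥P) : lp (fun _ : ↥P => ℂ) 2 →L[ℂ] ℂ :=
  LinearMap.mkContinuous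
    { toFun := fun f => f z
      map_add' := fun f g => by simp
      map_smul' := fun c f => by simp }
    1 (fun f => by
      show ‖f z‖ ≤ 1 * ‖f‖
      simpa using lp.norm_apply_le_norm (by norm_num) f z)

theorem evalCLM_apply (z : ↥P) (f : lp (fun _ : ↥P => ℂ) 2) : evalCLM z f = f z := rfl

variable (W : ↥P → (lp (fun _ : ↥P => ℂ) 2 →L[ℂ] lp (fun _ : ↥P => ℂ) 2))
  (hW : ∀ x y : ↥P, W x (epsilonVec y) = epsilonVec (x * y))

theorem mul_inj (s : ↥P) : Function.Injective (fun y : ↥P => s * y) := by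
  intro a b h
  have : (s : G) * a = (s : G) * b := congrArg Subtype.val h
  exact Subtype.ext (mul_left_cancel this)

include hW in
theorem hasSum_W_coord (s : ↥P) (ξ : lp (fun _ : ↥P => ℂ) 2) (z : ↥P) :
    HasSum (fun y : ↥P => if s * y = z then ξ y else 0) ((W s ξ) z) := by
  letI := Classical.decEq (↥P)
  have h1 : HasSum (fun y : ↥P => lp.single 2 y (ξ y)) ξ := lp.hasSum_single (by norm_num) ξ
  have h2 := ((W s).hasSum h1)
  have h3 := (evalCLM z).hasSum h2
  have : ∀ y : ↥P, evalCLM z (W s (lp.single 2 y (ξ y))) = if s * y = z then ξ y else 0 := by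
    intro y
    have e1 : lp.single 2 y (ξ y) = (ξ y) • epsilonVec y := by
      rw [epsilonVec, ← lp.single_smul, smul_eq_mul, mul_one]
    rw [e1, map_smul, hW, evalCLM_apply, epsilonVec]
    by_cases h : s * y = z
    · subst h; rw [if_pos rfl]
      simp [lp.single_apply_self]
    · rw [if_neg h]
      have : (lp.single 2 (s * y) (1:ℂ) : lp (fun _ : ↥P => ℂ) 2) z = 0 :=
        lp.single_apply_ne (E := fun _ : ↥P => ℂ) 2 (s * y) (1:ℂ) (fun hz => h (hz.symm))
      simp [this, Pi.single_apply, show z ≠ s * y from fun hz => h hz.symm]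
  simpa only [this, evalCLM_apply] using h3

include hW in
theorem W_coord_eq (s y : ↥P) (ξ : lp (fun _ : ↥P => ℂ) 2) :
    (W s ξ) (s * y) = ξ y := by
  refine (hasSum_W_coord W hW s ξ (s * y)).unique ?_
  have : (fun y' : ↥P => if s * y' = s * y then ξ y' else 0)
      = fun y' : ↥P => if y' = y then ξ y else 0 := by
    funext y'
    by_cases h : y' = y
    · subst h; simp
    · rw [if_neg h, if_neg (fun hc => h (mul_inj s hc))]
  rw [this]
  exact hasSum_ite_eq y (ξ y)

include hW in
theorem W_coord_zero (s : ↥P) (ξ : lp (fun _ : ↥P => ℂ) 2) (z : ↥P)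
    (hz : ∀ y : ↥P, s * y ≠ z) : (W s ξ) z = 0 := by
  refine (hasSum_W_coord W hW s ξ z).unique ?_
  have : (fun y : ↥P => if s * y = z then ξ y else 0) = fun _ => (0:ℂ) := by
    funext y; rw [if_neg (hz y)]
  rw [this]
  exact hasSum_zero

theorem norm_sq_eq (ξ : lp (fun _ : ↥P => ℂ) 2) : ‖ξ‖ ^ 2 = ∑' z : ↥P, ‖ξ z‖ ^ 2 := by
  have h := lp.norm_rpow_eq_tsum (p := 2) (E := fun _ : ↥P => ℂ) (by norm_num) ξ
  have h2 : ((2:ℝ≥0∞)).toReal = (2:ℝ) := by norm_num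
  rw [h2] at h
  have e : ∀ x : ℝ, x ^ (2:ℝ) = x ^ (2:ℕ) := fun x => by
    rw [show ((2:ℝ)) = ((2:ℕ):ℝ) by norm_num, Real.rpow_natCast]
  rw [e] at h
  simp only [e] at h
  exact h

theorem summable_norm_sq (ξ : lp (fun _ : ↥P => ℂ) 2) :
    Summable fun z : ↥P => ‖ξ z‖ ^ 2 := by
  have h := (lp.memℓp ξ).summable (p := 2) (by norm_num)
  have h2 : ((2:ℝ≥0∞)).toReal = (2:ℝ) := by norm_num
  rw [h2] at h
  have e : ∀ x : ℝ, x ^ (2:ℝ) = x ^ (2:ℕ) := fun x => by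
    rw [show ((2:ℝ)) = ((2:ℕ):ℝ) by norm_num, Real.rpow_natCast]
  simpa only [e] using h

include hW in
theorem tsum_W_comp (F : ↥P → ℝ) (s : ↥P) (ξ : lp (fun _ : ↥P => ℂ) 2) :
    ∑' z : ↥P, F z * ‖(W s ξ) z‖ ^ 2 = ∑' y : ↥P, F (s * y) * ‖ξ y‖ ^ 2 := by
  have hsupp : (Function.support fun z : ↥P => F z * ‖(W s ξ) z‖ ^ 2)
      ⊆ Set.range (fun y : ↥P => s * y) := by
    intro z hz
    by_contra hr
    have hz0 : ∀ y : ↥P, s * y ≠ z := by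
      intro y hy; exact hr ⟨y, hy⟩
    have := W_coord_zero W hW s ξ z hz0
    apply hz
    simp [Function.mem_support, this]
  calc ∑' z : ↥P, F z * ‖(W s ξ) z‖ ^ 2
      = ∑' y : ↥P, F (s * y) * ‖(W s ξ) (s * y)‖ ^ 2 :=
        (Function.Injective.tsum_eq (mul_inj s) hsupp).symm
    _ = ∑' y : ↥P, F (s * y) * ‖ξ y‖ ^ 2 :=
        tsum_congr fun y => by rw [W_coord_eq W hW s y ξ]

include hW in
theorem W_norm (s : ↥P) (ξ : lp (fun _ : ↥P => ℂ) 2) : ‖W s ξ‖ = ‖ξ‖ := by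
  have h : ‖W s ξ‖ ^ 2 = ‖ξ‖ ^ 2 := by
    rw [norm_sq_eq, norm_sq_eq]
    have := tsum_W_comp W hW (fun _ => (1:ℝ)) s ξ
    simpa using this
  have := congrArg Real.sqrt h
  simpa [Real.sqrt_sq, norm_nonneg] using this

/-- Cauchy–Schwarz for infinite sums of nonnegative reals. -/
theorem tsum_mul_le_CS {ι : Type*} (u v : ι → ℝ) (hu : ∀ i, 0 ≤ u i) (hv : ∀ i, 0 ≤ v i)
    {A B : ℝ} (hA : 0 ≤ A) (hB : 0 ≤ B)
    (hu2 : ∀ s : Finset ι, ∑ i ∈ s, u i ^ 2 ≤ A ^ 2)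
    (hv2 : ∀ s : Finset ι, ∑ i ∈ s, v i ^ 2 ≤ B ^ 2) :
    Summable (fun i => u i * v i) ∧ ∑' i, u i * v i ≤ A * B := by
  have key : ∀ s : Finset ι, ∑ i ∈ s, u i * v i ≤ A * B := by
    intro s
    have h := Finset.sum_mul_sq_le_sq_mul_sq s u v
    have h1 : (∑ i ∈ s, u i * v i) ^ 2 ≤ (A * B) ^ 2 := by
      calc (∑ i ∈ s, u i * v i) ^ 2 ≤ (∑ i ∈ s, u i ^ 2) * ∑ i ∈ s, v i ^ 2 := h
        _ ≤ A ^ 2 * B ^ 2 := by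
            apply mul_le_mul (hu2 s) (hv2 s)
              (Finset.sum_nonneg fun i _ => sq_nonneg _) (sq_nonneg A)
        _ = (A * B) ^ 2 := by ring
    have hs0 : 0 ≤ ∑ i ∈ s, u i * v i :=
      Finset.sum_nonneg fun i _ => mul_nonneg (hu i) (hv i)
    nlinarith [mul_nonneg hA hB]
  have hsum : Summable fun i => u i * v i :=
    summable_of_sum_le (fun i => mul_nonneg (hu i) (hv i)) key
  exact ⟨hsum, Summable.tsum_le_of_sum_le hsum key⟩

/-- Vector states on `ℓ²(P)` applied to close unit vectors are close. -/
theorem S_diff_bound (F : ↥P → ℝ) (M : ℝ) (hM0 : 0 ≤ M) (hM : ∀ z, |F z| ≤ M)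
    (η ζ : lp (fun _ : ↥P => ℂ) 2) (hη : ‖η‖ = 1) (hζ : ‖ζ‖ = 1) :
    |(∑' z : ↥P, F z * ‖η z‖ ^ 2) - ∑' z : ↥P, F z * ‖ζ z‖ ^ 2| ≤ 2 * M * ‖η - ζ‖ := by
  set u : ↥P → ℝ := fun z => ‖η z‖ + ‖ζ z‖ with hu_def
  set v : ↥P → ℝ := fun z => ‖η z - ζ z‖ with hv_def
  have hu : ∀ z, 0 ≤ u z := fun z => add_nonneg (norm_nonneg _) (norm_nonneg _)
  have hv : ∀ z, 0 ≤ v z := fun z => norm_nonneg _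
  have hsubz : ∀ z : ↥P, (η - ζ : lp (fun _ : ↥P => ℂ) 2) z = η z - ζ z := by
    intro z; rw [lp.coeFn_sub]; rfl
  have hu2 : ∀ s : Finset (↥P), ∑ i ∈ s, u i ^ 2 ≤ (2:ℝ) ^ 2 := by
    intro s
    have hle : ∀ i ∈ s, u i ^ 2 ≤ 2 * ‖η i‖ ^ 2 + 2 * ‖ζ i‖ ^ 2 := by
      intro i _
      have := sq_nonneg (‖η i‖ - ‖ζ i‖)
      simp only [hu_def]; nlinarith
    calc ∑ i ∈ s, u i ^ 2 ≤ ∑ i ∈ s, (2 * ‖η i‖ ^ 2 + 2 * ‖ζ i‖ ^ 2) :=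
          Finset.sum_le_sum hle
      _ = 2 * ∑ i ∈ s, ‖η i‖ ^ 2 + 2 * ∑ i ∈ s, ‖ζ i‖ ^ 2 := by
          rw [Finset.sum_add_distrib, Finset.mul_sum, Finset.mul_sum]
      _ ≤ 2 * ∑' i : ↥P, ‖η i‖ ^ 2 + 2 * ∑' i : ↥P, ‖ζ i‖ ^ 2 := by
          gcongr
          · exact Summable.sum_le_tsum s (fun i _ => sq_nonneg _) (summable_norm_sq η)
          · exact Summable.sum_le_tsum s (fun i _ => sq_nonneg _) (summable_norm_sq ζ)
      _ = 2 * ‖η‖ ^ 2 + 2 * ‖ζ‖ ^ 2 := by rw [norm_sq_eq, norm_sq_eq]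
      _ = (2:ℝ) ^ 2 := by rw [hη, hζ]; norm_num
  have hv2 : ∀ s : Finset (↥P), ∑ i ∈ s, v i ^ 2 ≤ ‖η - ζ‖ ^ 2 := by
    intro s
    calc ∑ i ∈ s, v i ^ 2 = ∑ i ∈ s, ‖(η - ζ : lp (fun _ : ↥P => ℂ) 2) i‖ ^ 2 := by
          refine Finset.sum_congr rfl fun i _ => ?_
          rw [hsubz]
      _ ≤ ∑' i : ↥P, ‖(η - ζ : lp (fun _ : ↥P => ℂ) 2) i‖ ^ 2 :=
          Summable.sum_le_tsum s (fun i _ => sq_nonneg _) (summable_norm_sq _)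
      _ = ‖η - ζ‖ ^ 2 := (norm_sq_eq _).symm
  obtain ⟨hsum_uv, htsum_uv⟩ := tsum_mul_le_CS u v hu hv (by norm_num) (norm_nonneg _) hu2 hv2
  have hptwise : ∀ z : ↥P, |F z * ‖η z‖ ^ 2 - F z * ‖ζ z‖ ^ 2| ≤ M * (u z * v z) := by
    intro z
    have h1 : |‖η z‖ ^ 2 - ‖ζ z‖ ^ 2| ≤ u z * v z := by
      have e : ‖η z‖ ^ 2 - ‖ζ z‖ ^ 2 = (‖η z‖ + ‖ζ z‖) * (‖η z‖ - ‖ζ z‖) := by ring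
      rw [e, abs_mul, abs_of_nonneg (hu z)]
      have : |‖η z‖ - ‖ζ z‖| ≤ ‖η z - ζ z‖ := abs_norm_sub_norm_le _ _
      exact mul_le_mul_of_nonneg_left this (hu z)
    calc |F z * ‖η z‖ ^ 2 - F z * ‖ζ z‖ ^ 2| = |F z| * |‖η z‖ ^ 2 - ‖ζ z‖ ^ 2| := by
          rw [← abs_mul]; ring_nf
      _ ≤ M * (u z * v z) :=
          mul_le_mul (hM z) h1 (abs_nonneg _) hM0
  have hsum1 : Summable fun z : ↥P => F z * ‖η z‖ ^ 2 := by
    apply Summable.of_norm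
    apply Summable.of_nonneg_of_le (fun z => norm_nonneg _)
      (fun z => ?_) ((summable_norm_sq η).mul_left M)
    calc ‖F z * ‖η z‖ ^ 2‖ = |F z| * ‖η z‖ ^ 2 := by
          rw [Real.norm_eq_abs, abs_mul, abs_of_nonneg (sq_nonneg (‖η z‖))]
      _ ≤ M * ‖η z‖ ^ 2 := mul_le_mul_of_nonneg_right (hM z) (sq_nonneg _)
  have hsum2 : Summable fun z : ↥P => F z * ‖ζ z‖ ^ 2 := by
    apply Summable.of_norm
    apply Summable.of_nonneg_of_le (fun z => norm_nonneg _)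
      (fun z => ?_) ((summable_norm_sq ζ).mul_left M)
    calc ‖F z * ‖ζ z‖ ^ 2‖ = |F z| * ‖ζ z‖ ^ 2 := by
          rw [Real.norm_eq_abs, abs_mul, abs_of_nonneg (sq_nonneg (‖ζ z‖))]
      _ ≤ M * ‖ζ z‖ ^ 2 := mul_le_mul_of_nonneg_right (hM z) (sq_nonneg _)
  have hdiff : (∑' z : ↥P, F z * ‖η z‖ ^ 2) - ∑' z : ↥P, F z * ‖ζ z‖ ^ 2
      = ∑' z : ↥P, (F z * ‖η z‖ ^ 2 - F z * ‖ζ z‖ ^ 2) := (Summable.tsum_sub hsum1 hsum2).symm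
  rw [hdiff]
  have habs : |∑' z : ↥P, (F z * ‖η z‖ ^ 2 - F z * ‖ζ z‖ ^ 2)|
      ≤ ∑' z : ↥P, |F z * ‖η z‖ ^ 2 - F z * ‖ζ z‖ ^ 2| := by
    have hsd : Summable fun z : ↥P => F z * ‖η z‖ ^ 2 - F z * ‖ζ z‖ ^ 2 := hsum1.sub hsum2
    simpa [Real.norm_eq_abs] using norm_tsum_le_tsum_norm (f := fun z : ↥P =>
      F z * ‖η z‖ ^ 2 - F z * ‖ζ z‖ ^ 2) (by simpa [Real.norm_eq_abs] using hsd.abs)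
  refine habs.trans ?_
  have hsum_abs : Summable fun z : ↥P => |F z * ‖η z‖ ^ 2 - F z * ‖ζ z‖ ^ 2| :=
    (hsum1.sub hsum2).abs
  calc ∑' z : ↥P, |F z * ‖η z‖ ^ 2 - F z * ‖ζ z‖ ^ 2|
      ≤ ∑' z : ↥P, M * (u z * v z) :=
        Summable.tsum_le_tsum hptwise hsum_abs (hsum_uv.mul_left M)
    _ = M * ∑' z : ↥P, u z * v z := tsum_mul_left
    _ ≤ M * (2 * ‖η - ζ‖) := by
        apply mul_le_mul_of_nonneg_left _ hM0
        simpa [mul_comm] using htsum_uv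
    _ = 2 * M * ‖η - ζ‖ := by ring

include hW in
set_option maxHeartbeats 1000000 in
theorem exists_good_vec
    (hnorm : ∀ lam : ↥P →₀ ℝ, (∀ s, 0 ≤ lam s) →
      ‖∑ s ∈ lam.support, ((lam s : ℂ) • W s)‖ = ∑ s ∈ lam.support, lam s)
    (F : Finset ↥P) (n : ℕ) :
    ∃ ξ : lp (fun _ : ↥P => ℂ) 2, ‖ξ‖ = 1 ∧
      ∀ s ∈ insert (1:↥P) F, ∀ t ∈ insert (1:↥P) F,
        ‖W s ξ - W t ξ‖ ^ 2 ≤ 4 / (n + 1 : ℝ) := by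
  set F' : Finset ↥P := insert (1:↥P) F with hF'
  have hcard1 : 1 ≤ F'.card := Finset.card_pos.mpr ⟨1, Finset.mem_insert_self _ _⟩
  set N : ℝ := (F'.card : ℝ) with hN
  have hN1 : (1:ℝ) ≤ N := by rw [hN]; exact_mod_cast hcard1
  set ε : ℝ := 1 / (n + 1 : ℝ) with hε
  have hε0 : 0 < ε := by positivity
  have hε1 : ε ≤ 1 := by
    rw [hε]
    rw [div_le_one (by positivity)]
    linarith [Nat.cast_nonneg (α := ℝ) n]
  -- the norm hypothesis for the indicator of F'
  set lam : ↥P →₀ ℝ := Finsupp.indicator F' (fun _ _ => (1:ℝ)) with hlam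
  have hlam_supp : lam.support = F' := by
    ext i
    simp [hlam, Finsupp.mem_support_iff, Finsupp.indicator_apply]
  have hlam_nonneg : ∀ s, 0 ≤ lam s := by
    intro s
    simp only [hlam, Finsupp.indicator_apply]
    split <;> norm_num
  have hT := hnorm lam hlam_nonneg
  rw [hlam_supp] at hT
  have hTsum : ∑ s ∈ F', ((lam s : ℂ) • W s) = ∑ s ∈ F', W s := by
    refine Finset.sum_congr rfl fun s hs => ?_
    rw [hlam, Finsupp.indicator_of_mem hs]
    norm_num
  have hRsum : ∑ s ∈ F', lam s = N := by
    rw [show ∑ s ∈ F', lam s = ∑ s ∈ F', (1:ℝ) from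
      Finset.sum_congr rfl fun s hs => by rw [hlam, Finsupp.indicator_of_mem hs]]
    simp [hN]
  rw [hTsum, hRsum] at hT
  set T : lp (fun _ : ↥P => ℂ) 2 →L[ℂ] lp (fun _ : ↥P => ℂ) 2 := ∑ s ∈ F', W s with hTdef
  -- find an almost-maximizing vector
  have hex : ∃ ξ : lp (fun _ : ↥P => ℂ) 2, (N - ε) * ‖ξ‖ < ‖T ξ‖ := by
    by_contra hc
    push_neg at hc
    have : ‖T‖ ≤ N - ε := T.opNorm_le_bound (by linarith) fun ξ => hc ξ
    rw [hT] at this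
    linarith
  obtain ⟨ξ₀, hξ₀⟩ := hex
  have hξ0 : ξ₀ ≠ 0 := by
    intro h
    rw [h] at hξ₀
    simp at hξ₀
  have hξpos : 0 < ‖ξ₀‖ := norm_pos_iff.mpr hξ0
  set η : lp (fun _ : ↥P => ℂ) 2 := ((‖ξ₀‖⁻¹ : ℝ) : ℂ) • ξ₀ with hηdef
  have hηnorm : ‖η‖ = 1 := by
    rw [hηdef, norm_smul, Complex.norm_real, Real.norm_eq_abs,
      abs_of_nonneg (inv_nonneg.mpr (norm_nonneg ξ₀))]
    field_simp
  have hTη : N - ε < ‖T η‖ := by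
    have hTsm : T η = ((‖ξ₀‖⁻¹ : ℝ) : ℂ) • T ξ₀ := by rw [hηdef, map_smul]
    rw [hTsm, norm_smul, Complex.norm_real, Real.norm_eq_abs,
      abs_of_nonneg (inv_nonneg.mpr (norm_nonneg ξ₀)), ← div_eq_inv_mul,
      lt_div_iff₀ hξpos]
    exact hξ₀
  refine ⟨η, hηnorm, ?_⟩
  intro s hs t ht
  by_cases hst : s = t
  · subst hst
    simp only [sub_self, norm_zero]
    have : (0:ℝ) ≤ 4 / (n + 1 : ℝ) := by positivity
    simpa using this
  -- main estimate
  have hsub : ({s, t} : Finset ↥P) ⊆ F' := by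
    intro u hu
    rcases Finset.mem_insert.mp hu with h | h
    · subst h; exact hs
    · rw [Finset.mem_singleton.mp h]; exact ht
  have hsplit : T η = (∑ u ∈ F' \ {s, t}, W u η) + (W s η + W t η) := by
    rw [hTdef, ContinuousLinearMap.sum_apply, ← Finset.sum_sdiff hsub]
    congr 1
    rw [Finset.sum_pair hst]
  have hcard2 : ({s, t} : Finset ↥P).card = 2 := Finset.card_pair hst
  have hcardsd : ((F' \ {s, t}).card : ℝ) = N - 2 := by
    rw [Finset.card_sdiff_of_subset hsub, hcard2]
    have h2le : 2 ≤ F'.card := by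
      calc 2 = ({s, t} : Finset ↥P).card := hcard2.symm
        _ ≤ F'.card := Finset.card_le_card hsub
    push_cast [Nat.cast_sub h2le]
    ring
  have hnorm_sum : ‖T η‖ ≤ (N - 2) + ‖W s η + W t η‖ := by
    rw [hsplit]
    refine (norm_add_le _ _).trans ?_
    gcongr
    calc ‖∑ u ∈ F' \ {s, t}, W u η‖ ≤ ∑ u ∈ F' \ {s, t}, ‖W u η‖ := norm_sum_le _ _
      _ = ∑ u ∈ F' \ {s, t}, (1:ℝ) := Finset.sum_congr rfl fun u _ => by
          rw [W_norm W hW, hηnorm]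
      _ = N - 2 := by rw [Finset.sum_const, nsmul_eq_mul, mul_one, hcardsd]
  have hlow : 2 - ε < ‖W s η + W t η‖ := by linarith
  have hpar := parallelogram_law_with_norm ℂ (W s η) (W t η)
  have hns : ‖W s η‖ = 1 := by rw [W_norm W hW, hηnorm]
  have hnt : ‖W t η‖ = 1 := by rw [W_norm W hW, hηnorm]
  have hsq : (2 - ε) ^ 2 ≤ ‖W s η + W t η‖ ^ 2 := by
    have h20 : 0 ≤ 2 - ε := by linarith
    exact pow_le_pow_left₀ h20 (le_of_lt hlow) 2
  rw [hns, hnt] at hpar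
  have : ‖W s η - W t η‖ ^ 2 ≤ 4 * ε := by nlinarith [sq_nonneg ε]
  calc ‖W s η - W t η‖ ^ 2 ≤ 4 * ε := this
    _ = 4 / (n + 1 : ℝ) := by rw [hε]; ring

end AmenAux

set_option maxHeartbeats 1000000

/-- Proposition 6.3. Let `(G,P)` be a lattice ordered group and let
`W` be the left regular representation of `P` on `ℓ²(P)`, i.e. `W_x ε_y = ε_{xy}`.
If `‖∑_{s} λ_s W_s‖ = ∑_s λ_s` for every finitely supported nonnegative function `λ` on
`P`, then `G` is an amenable group. -/
theorem amenable_of_norm_condition {G : Type*} [Group G] (P : Submonoid G)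
    (hpo : IsPoGroup P)
    (hlat : ∀ x y : G, ∃ m, IsLub' P x y m)
    (W : ↥P → (lp (fun _ : ↥P => ℂ) 2 →L[ℂ] lp (fun _ : ↥P => ℂ) 2))
    (hW : ∀ x y : ↥P, W x (epsilonVec y) = epsilonVec (x * y))
    (hnorm : ∀ lam : ↥P →₀ ℝ, (∀ s, 0 ≤ lam s) →
      ‖∑ s ∈ lam.support, ((lam s : ℂ) • W s)‖ = ∑ s ∈ lam.support, lam s) :
    IsAmenable G := by
  classical
  letI : TopologicalSpace G := ⊥
  haveI : DiscreteTopology G := ⟨rfl⟩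
  -- the almost-invariant unit vectors
  have hvec : ∀ i : Finset ↥P × ℕ, ∃ ξ : lp (fun _ : ↥P => ℂ) 2, ‖ξ‖ = 1 ∧
      ∀ s ∈ insert (1:↥P) i.1, ∀ t ∈ insert (1:↥P) i.1,
        ‖W s ξ - W t ξ‖ ^ 2 ≤ 4 / (i.2 + 1 : ℝ) :=
    fun i => AmenAux.exists_good_vec W hW hnorm i.1 i.2
  choose η hη1 hη2 using hvec
  set D : Finset ↥P × ℕ → ↥P → ℝ := fun i c => ‖W c (η i) - W 1 (η i)‖ with hD
  have hDtend : ∀ c : ↥P,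
      Filter.Tendsto (fun i => D i c) Filter.atTop (nhds 0) := by
    intro c
    rw [Metric.tendsto_nhds]
    intro δ hδ
    obtain ⟨n₀, hn₀⟩ := exists_nat_gt (4 / δ ^ 2)
    rw [Filter.eventually_atTop]
    refine ⟨({c}, n₀), ?_⟩
    rintro ⟨F, n⟩ hi
    obtain ⟨hF, hn⟩ := Prod.le_def.mp hi
    have hc : c ∈ insert (1:↥P) F :=
      Finset.mem_insert_of_mem (hF (Finset.mem_singleton_self c))
    have h1 : (1:↥P) ∈ insert (1:↥P) F := Finset.mem_insert_self _ _
    have hb := hη2 (F, n) c hc 1 h1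
    have hlt : 4 / ((n:ℝ) + 1) < δ ^ 2 := by
      have hn' : (n₀:ℝ) ≤ n := by exact_mod_cast hn
      have h4 : 4 / δ ^ 2 < (n:ℝ) + 1 := by linarith
      rw [div_lt_iff₀ (by positivity)] at h4 ⊢
      nlinarith
    have hsq : D (F, n) c ^ 2 < δ ^ 2 := lt_of_le_of_lt hb hlt
    have hD0 : (0:ℝ) ≤ D (F, n) c := norm_nonneg _
    rw [Real.dist_eq, sub_zero, abs_of_nonneg hD0]
    nlinarith
  -- the associated probability densities
  set m : Finset ↥P × ℕ → ↥P → ℝ := fun i y => ‖η i y‖ ^ 2 with hm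
  have hm_sum : ∀ i, Summable (m i) := fun i => AmenAux.summable_norm_sq (η i)
  have hm_nonneg : ∀ i y, 0 ≤ m i y := fun i y => sq_nonneg _
  have hm_one : ∀ i, ∑' y : ↥P, m i y = 1 := by
    intro i
    rw [hm]
    have := AmenAux.norm_sq_eq (η i)
    rw [hη1 i] at this
    simpa using this.symm
  -- the functionals
  set Φ : (G → ℝ) → Finset ↥P × ℕ → ℝ :=
    fun f i => ∑' y : ↥P, f ((y : ↥P) : G) * m i y with hΦ
  have hsummable : ∀ (f : G → ℝ) (Mf : ℝ), (∀ x, |f x| ≤ Mf) →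
      ∀ (c : ↥P) (i : Finset ↥P × ℕ),
      Summable fun y : ↥P => f ((c * y : ↥P) : G) * m i y := by
    intro f Mf hb c i
    apply Summable.of_norm
    refine Summable.of_nonneg_of_le (fun y => norm_nonneg _) (fun y => ?_)
      ((hm_sum i).mul_left Mf)
    rw [Real.norm_eq_abs, abs_mul, abs_of_nonneg (hm_nonneg i y)]
    exact mul_le_mul_of_nonneg_right (hb _) (hm_nonneg i y)
  have hone_mul : ∀ (f : G → ℝ) (i : Finset ↥P × ℕ),
      (∑' y : ↥P, f ((1 * y : ↥P) : G) * m i y) = Φ f i := by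
    intro f i
    rw [hΦ]
    exact tsum_congr fun y => by rw [one_mul]
  -- the key almost-invariance bound
  have key : ∀ (f : G → ℝ) (Mf : ℝ), 0 ≤ Mf → (∀ x, |f x| ≤ Mf) →
      ∀ (c : ↥P) (i : Finset ↥P × ℕ),
      |(∑' y : ↥P, f ((c * y : ↥P) : G) * m i y) - Φ f i| ≤ 2 * Mf * D i c := by
    intro f Mf hMf0 hMf c i
    have e1 : (∑' y : ↥P, f ((c * y : ↥P) : G) * m i y)
        = ∑' z : ↥P, (fun z : ↥P => f (z : G)) z * ‖(W c (η i)) z‖ ^ 2 := by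
      simp only [hm]
      exact (AmenAux.tsum_W_comp W hW (fun z : ↥P => f (z : G)) c (η i)).symm
    have e2 : Φ f i
        = ∑' z : ↥P, (fun z : ↥P => f (z : G)) z * ‖(W 1 (η i)) z‖ ^ 2 := by
      rw [← hone_mul f i]
      simp only [hm]
      exact (AmenAux.tsum_W_comp W hW (fun z : ↥P => f (z : G)) 1 (η i)).symm
    rw [e1, e2]
    exact AmenAux.S_diff_bound _ Mf hMf0 (fun z => hMf _) _ _
      (by rw [AmenAux.W_norm W hW, hη1]) (by rw [AmenAux.W_norm W hW, hη1])
  -- boundedness of the functionals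
  have hΦ_mem : ∀ (f : G → ℝ) (Mf : ℝ), (∀ x, |f x| ≤ Mf) →
      ∀ i, |Φ f i| ≤ Mf := by
    intro f Mf hb i
    have hs : Summable fun y : ↥P => f ((1 * y : ↥P) : G) * m i y :=
      hsummable f Mf hb 1 i
    rw [← hone_mul f i]
    have habs : |∑' y : ↥P, f ((1 * y : ↥P) : G) * m i y|
        ≤ ∑' y : ↥P, |f ((1 * y : ↥P) : G) * m i y| := by
      simpa only [Real.norm_eq_abs] using norm_tsum_le_tsum_norm
        (f := fun y : ↥P => f ((1 * y : ↥P) : G) * m i y)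
        (by simpa only [Real.norm_eq_abs] using hs.abs)
    refine habs.trans ?_
    calc ∑' y : ↥P, |f ((1 * y : ↥P) : G) * m i y|
        ≤ ∑' y : ↥P, Mf * m i y := by
          refine Summable.tsum_le_tsum (fun y => ?_) hs.abs ((hm_sum i).mul_left Mf)
          rw [abs_mul, abs_of_nonneg (hm_nonneg i y)]
          exact mul_le_mul_of_nonneg_right (hb _) (hm_nonneg i y)
      _ = Mf * ∑' y : ↥P, m i y := tsum_mul_left
      _ = Mf := by rw [hm_one i, mul_one]
  -- an ultrafilter extending the Følner net
  obtain ⟨U, hU⟩ := Filter.exists_ultrafilter_le (Filter.atTop : Filter (Finset ↥P × ℕ))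
  have hlim : ∀ f : BoundedContinuousFunction G ℝ,
      ∃ c : ℝ, Filter.Tendsto (Φ (fun x => f x)) (↑U) (nhds c) := by
    intro f
    have hb : ∀ x, |f x| ≤ ‖f‖ := fun x => by
      rw [← Real.norm_eq_abs]; exact f.norm_coe_le_norm x
    have hmem : ∀ i, Φ (fun x => f x) i ∈ Set.Icc (-‖f‖) ‖f‖ := fun i => by
      have := hΦ_mem (fun x => f x) ‖f‖ hb i
      exact ⟨neg_le_of_abs_le this, le_of_abs_le this⟩
    have hle : (U.map (Φ (fun x => f x)) : Filter ℝ)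
        ≤ Filter.principal (Set.Icc (-‖f‖) ‖f‖) := by
      rw [Filter.le_principal_iff]
      exact Filter.mem_map.mpr (Filter.univ_mem' hmem)
    obtain ⟨a, -, ha⟩ := isCompact_Icc.ultrafilter_le_nhds (U.map (Φ (fun x => f x))) hle
    exact ⟨a, by rwa [Ultrafilter.coe_map] at ha⟩
  choose μ0 hμ0 using hlim
  suffices hsuff : ∃ μ : BoundedContinuousFunction G ℝ →ₗ[ℝ] ℝ,
      (∀ f : BoundedContinuousFunction G ℝ, (∀ x, 0 ≤ f x) → 0 ≤ μ f) ∧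
      μ 1 = 1 ∧
      ∀ (g : G) (f : BoundedContinuousFunction G ℝ),
        μ (f.compContinuous ⟨fun x => g * x, continuous_of_discreteTopology⟩) = μ f by
    exact hsuff
  refine ⟨{ toFun := μ0
            map_add' := ?_
            map_smul' := ?_ }, ?_, ?_, ?_⟩
  · -- additivity
    intro f g
    have hfb : ∀ x, |f x| ≤ ‖f‖ := fun x => by
      rw [← Real.norm_eq_abs]; exact f.norm_coe_le_norm x
    have hgb : ∀ x, |g x| ≤ ‖g‖ := fun x => by
      rw [← Real.norm_eq_abs]; exact g.norm_coe_le_norm x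
    have heq : ∀ i, Φ (fun x => f x) i + Φ (fun x => g x) i
        = Φ (fun x => (f + g) x) i := by
      intro i
      simp only [hΦ]
      rw [← Summable.tsum_add (by simpa using hsummable (fun x => f x) ‖f‖ hfb 1 i)
        (by simpa using hsummable (fun x => g x) ‖g‖ hgb 1 i)]
      exact tsum_congr fun y => by
        simp only [BoundedContinuousFunction.coe_add, Pi.add_apply]; ring
    exact tendsto_nhds_unique (hμ0 (f + g)) (((hμ0 f).add (hμ0 g)).congr heq)
  · -- homogeneity
    intro c f
    have heq : ∀ i, c * Φ (fun x => f x) i = Φ (fun x => (c • f) x) i := by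
      intro i
      simp only [hΦ]
      rw [← tsum_mul_left]
      exact tsum_congr fun y => by
        simp only [BoundedContinuousFunction.coe_smul, Pi.smul_apply, smul_eq_mul]; ring
    have h2 : Filter.Tendsto (fun i => c * Φ (fun x => f x) i) (↑U)
        (nhds (c * μ0 f)) := (hμ0 f).const_mul c
    simpa using tendsto_nhds_unique (hμ0 (c • f)) (h2.congr heq)
  · -- positivity
    intro f hf
    refine ge_of_tendsto (hμ0 f) (Filter.Eventually.of_forall fun i => ?_)
    simp only [hΦ]
    exact tsum_nonneg fun y => mul_nonneg (hf _) (hm_nonneg i y)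
  · -- normalization
    refine tendsto_nhds_unique (hμ0 1) ?_
    have heq : ∀ i, (1:ℝ) = Φ (fun x => (1 : BoundedContinuousFunction G ℝ) x) i := by
      intro i
      simp only [hΦ, BoundedContinuousFunction.coe_one, Pi.one_apply, one_mul]
      exact (hm_one i).symm
    exact (tendsto_const_nhds :
      Filter.Tendsto (fun _ : Finset ↥P × ℕ => (1:ℝ)) (↑U) (nhds 1)).congr heq
  · -- invariance
    intro g f
    set f' : BoundedContinuousFunction G ℝ :=
      f.compContinuous ⟨fun x => g * x, continuous_of_discreteTopology⟩ with hf'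
    have hf'app : ∀ x : G, f' x = f (g * x) := fun x => rfl
    obtain ⟨mm, hm1, hm2, -⟩ := hlat g 1
    have hmmP : mm ∈ P := by
      have : (1:G)⁻¹ * mm ∈ P := hm2
      simpa using this
    have hbP : g⁻¹ * mm ∈ P := hm1
    set a : ↥P := ⟨mm, hmmP⟩ with ha_def
    set b : ↥P := ⟨g⁻¹ * mm, hbP⟩ with hb_def
    have hab : (a : G) = g * (b : G) := by
      rw [ha_def, hb_def]
      simp
    have hfb : ∀ x, |f x| ≤ ‖f‖ := fun x => by
      rw [← Real.norm_eq_abs]; exact f.norm_coe_le_norm x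
    have hf'b : ∀ x, |f' x| ≤ ‖f‖ := fun x => by
      rw [hf'app]; exact hfb _
    have heqab : ∀ i, (∑' y : ↥P, f' ((b * y : ↥P) : G) * m i y)
        = ∑' y : ↥P, f ((a * y : ↥P) : G) * m i y := by
      intro i
      refine tsum_congr fun y => ?_
      rw [hf'app]
      congr 1
      push_cast
      rw [← mul_assoc, ← hab]
    have hbound : ∀ i, |Φ (fun x => f' x) i - Φ (fun x => f x) i|
        ≤ 2 * ‖f‖ * D i b + 2 * ‖f‖ * D i a := by
      intro i
      have t1 := key (fun x => f' x) ‖f‖ (norm_nonneg f) hf'b b i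
      have t2 := key (fun x => f x) ‖f‖ (norm_nonneg f) hfb a i
      rw [heqab i] at t1
      calc |Φ (fun x => f' x) i - Φ (fun x => f x) i|
          = |(Φ (fun x => f' x) i - (∑' y : ↥P, f ((a * y : ↥P) : G) * m i y))
            + ((∑' y : ↥P, f ((a * y : ↥P) : G) * m i y) - Φ (fun x => f x) i)| := by
            ring_nf
        _ ≤ |Φ (fun x => f' x) i - (∑' y : ↥P, f ((a * y : ↥P) : G) * m i y)|
            + |(∑' y : ↥P, f ((a * y : ↥P) : G) * m i y) - Φ (fun x => f x) i| :=
            abs_add_le _ _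
        _ ≤ 2 * ‖f‖ * D i b + 2 * ‖f‖ * D i a := by
            rw [abs_sub_comm]
            exact add_le_add t1 t2
    have hdiff0 : Filter.Tendsto
        (fun i => Φ (fun x => f' x) i - Φ (fun x => f x) i) Filter.atTop (nhds 0) := by
      apply squeeze_zero_norm (fun i => hbound i)
      have h1 : Filter.Tendsto (fun i => 2 * ‖f‖ * D i b) Filter.atTop (nhds 0) := by
        simpa using (hDtend b).const_mul (2 * ‖f‖)
      have h2 : Filter.Tendsto (fun i => 2 * ‖f‖ * D i a) Filter.atTop (nhds 0) := by
        simpa using (hDtend a).const_mul (2 * ‖f‖)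
      simpa using h1.add h2
    have hdiffU : Filter.Tendsto
        (fun i => Φ (fun x => f' x) i - Φ (fun x => f x) i) (↑U) (nhds 0) :=
      hdiff0.mono_left hU
    have : Filter.Tendsto (Φ (fun x => f' x)) (↑U) (nhds (μ0 f)) := by
      have := hdiffU.add (hμ0 f)
      simpa using this
    exact tendsto_nhds_unique (hμ0 f') this
end
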